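/- arXiv:1406.6015 — 3 statements merged into one kernel-verified Lean document; each statement's English description precedes it below -/
import Mathlib

section
/- Let P = {x ∈ ℝⁿ : Ax ≥ b, x ≥ 0} where A has non-negative entries and b ≥ 0. If v and v' are distinct vertices of P and a strict convex combination y = Σ λ_k u^k of vertices u^1,…,u^ℓ of P satisfies y ≤ (v+v')/2 componentwise, implies ℓ = 2 with {u^1,u^2} = {v,v'}, then v and v' are adjacent in P; conversely, adjacency implies this property. -/
open Finset

/-- Support of a vector. -/
def supp {n : ℕ} (x : Fin n → ℝ) : Set (Fin n) := {j | x j ≠ 0}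

/-- Support of the `t`-th row of a matrix. -/
def rowSupp {m n : ℕ} (A : Matrix (Fin m) (Fin n) ℝ) (t : Fin m) : Set (Fin n) :=
  {j | A t j ≠ 0}

def IsBinaryMatrix {m n : ℕ} (A : Matrix (Fin m) (Fin n) ℝ) : Prop :=
  ∀ t j, A t j = 0 ∨ A t j = 1

def IsBinaryVec {n : ℕ} (x : Fin n → ℝ) : Prop := ∀ j, x j = 0 ∨ x j = 1

/-- The polyhedron `{x | A x ≥ b, x ≥ 0}`. -/
def polyP {m n : ℕ} (A : Matrix (Fin m) (Fin n) ℝ) (b : Fin m → ℝ) : Set (Fin n → ℝ) :=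
  {x | (∀ i, b i ≤ ∑ j, A i j * x j) ∧ ∀ j, 0 ≤ x j}

/-- The linear relaxation `Q(A) = {x | A x ≥ 1, x ≥ 0}`. -/
def polyQ {m n : ℕ} (A : Matrix (Fin m) (Fin n) ℝ) : Set (Fin n → ℝ) :=
  {x | (∀ i, 1 ≤ ∑ j, A i j * x j) ∧ ∀ j, 0 ≤ x j}

/-- The set covering polyhedron `Q*(A)`: convex hull of nonnegative integer solutions of
`A x ≥ 1`. -/
def Qstar {m n : ℕ} (A : Matrix (Fin m) (Fin n) ℝ) : Set (Fin n → ℝ) :=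
  convexHull ℝ {x | (∀ j, ∃ k : ℕ, x j = k) ∧ ∀ i, 1 ≤ ∑ j, A i j * x j}

/-- A vertex of a convex set is an extreme point. -/
def IsVertex {n : ℕ} (S : Set (Fin n → ℝ)) (v : Fin n → ℝ) : Prop :=
  v ∈ S.extremePoints ℝ

/-- Two distinct vertices are adjacent when they lie on a common edge, i.e. the segment
joining them is a face (extreme subset) of `S`. -/
def AdjacentVerts {n : ℕ} (S : Set (Fin n → ℝ)) (v w : Fin n → ℝ) : Prop :=
  v ≠ w ∧ IsVertex S v ∧ IsVertex S w ∧ IsExtreme ℝ S (segment ℝ v w)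

/-- There is a row support `C` with `C ∩ supp v = {p}` and `C ∩ supp v' = {p'}`. -/
def jsgEdge {m n : ℕ} (A : Matrix (Fin m) (Fin n) ℝ) (v v' : Fin n → ℝ)
    (p p' : Fin n) : Prop :=
  ∃ t, rowSupp A t ∩ supp v = {p} ∧ rowSupp A t ∩ supp v' = {p'}

/-- The joint saturation graph of `v` and `v'` with respect to `A`. -/
def JSG {m n : ℕ} (A : Matrix (Fin m) (Fin n) ℝ) (v v' : Fin n → ℝ) :
    SimpleGraph (Fin n) where
  Adj p p' := p ≠ p' ∧ (jsgEdge A v v' p p' ∨ jsgEdge A v v' p' p)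
  symm := by constructor; intro p p' h; exact ⟨h.1.symm, h.2.symm⟩
  loopless := by constructor; intro p h; exact h.1 rfl

/-- The node set of the joint saturation graph: the symmetric difference of the supports. -/
def jsgNodes {n : ℕ} (v v' : Fin n → ℝ) : Set (Fin n) :=
  (supp v \ supp v') ∪ (supp v' \ supp v)

def JSGConnected {m n : ℕ} (A : Matrix (Fin m) (Fin n) ℝ) (v v' : Fin n → ℝ) : Prop :=
  ∀ p ∈ jsgNodes v v', ∀ q ∈ jsgNodes v v', (JSG A v v').Reachable p q

/-- One of the two partite sets is contained in a single connected component. -/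
def JSGPartiteConnected {m n : ℕ} (A : Matrix (Fin m) (Fin n) ℝ) (v v' : Fin n → ℝ) : Prop :=
  (∀ p ∈ supp v \ supp v', ∀ q ∈ supp v \ supp v', (JSG A v v').Reachable p q) ∨
  (∀ p ∈ supp v' \ supp v, ∀ q ∈ supp v' \ supp v, (JSG A v v').Reachable p q)

/-- Exactly two components, one of which is an isolated node. -/
def JSGAlmostConnected {m n : ℕ} (A : Matrix (Fin m) (Fin n) ℝ) (v v' : Fin n → ℝ) : Prop :=
  ∃ q ∈ jsgNodes v v', (∀ p, ¬ (JSG A v v').Adj q p) ∧ (jsgNodes v v' \ {q}).Nonempty ∧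
    ∀ p ∈ jsgNodes v v' \ {q}, ∀ r ∈ jsgNodes v v' \ {q}, (JSG A v v').Reachable p r

/-- The (directed) circular arc from `i` to `j` in `Fin n`. -/
def arc {n : ℕ} [NeZero n] (i j : Fin n) : Set (Fin n) :=
  {k | ∃ h : ℕ, h ≤ ((j - i : Fin n) : ℕ) ∧ k = i + (Fin.ofNat n h)}

/-- A matrix is row circular if each row support is a circular arc. -/
def RowCircular {m n : ℕ} [NeZero n] (A : Matrix (Fin m) (Fin n) ℝ) : Prop :=
  ∀ t, ∃ i j : Fin n, rowSupp A t = arc i j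

/-- The standard assumptions: binary, no dominating rows, between 2 and n-1 ones per row,
no all-zero or all-one column. -/
def StandardAssumptions {m n : ℕ} (A : Matrix (Fin m) (Fin n) ℝ) : Prop :=
  IsBinaryMatrix A ∧
  (∀ s t : Fin m, s ≠ t → ¬ rowSupp A s ⊆ rowSupp A t) ∧
  (∀ t, 2 ≤ (rowSupp A t).ncard ∧ (rowSupp A t).ncard ≤ n - 1) ∧
  (∀ j : Fin n, (∃ t, A t j ≠ 0) ∧ (∃ t, A t j = 0))

/-- `a` and `b` occur consecutively (in either order) in the list `l`. -/
def ListConsec {α : Type*} (l : List α) (a b : α) : Prop :=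
  ∃ k : ℕ, (l[k]? = some a ∧ l[k+1]? = some b) ∨ (l[k]? = some b ∧ l[k+1]? = some a)

/-- `a` and `b` occur cyclically consecutively (in either order) in the list `l`. -/
def CycConsec {α : Type*} (l : List α) (a b : α) : Prop :=
  ∃ k : ℕ, k < l.length ∧
    ((l[k]? = some a ∧ l[(k+1) % l.length]? = some b) ∨
     (l[k]? = some b ∧ l[(k+1) % l.length]? = some a))

/-- The set `S` induces a path (possibly a single node) in `G`. -/
def IsPathOn {n : ℕ} (G : SimpleGraph (Fin n)) (S : Set (Fin n)) : Prop :=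
  ∃ l : List (Fin n), l.Nodup ∧ (∀ x, x ∈ S ↔ x ∈ l) ∧
    (∀ a b, a ∈ S → G.Adj a b → ListConsec l a b) ∧
    (∀ a b, ListConsec l a b → G.Adj a b)

/-- The set `S` induces a cycle in `G`. -/
def IsCycleOn {n : ℕ} (G : SimpleGraph (Fin n)) (S : Set (Fin n)) : Prop :=
  ∃ l : List (Fin n), 3 ≤ l.length ∧ l.Nodup ∧ (∀ x, x ∈ S ↔ x ∈ l) ∧
    (∀ a b, a ∈ S → G.Adj a b → CycConsec l a b) ∧
    (∀ a b, CycConsec l a b → G.Adj a b)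

/-- `p` and `q` are cyclically consecutive elements of `S`. -/
def CyclConsecIn {n : ℕ} [NeZero n] (S : Set (Fin n)) (p q : Fin n) : Prop :=
  p ≠ q ∧ p ∈ S ∧ q ∈ S ∧ (arc p q ∩ S = {p, q} ∨ arc q p ∩ S = {p, q})

/-- The circulant matrix `C(n,2)` with row supports `{t, t+1}` (mod n). -/
def Cn2 (n : ℕ) [NeZero n] : Matrix (Fin n) (Fin n) ℝ :=
  fun t j => if j = t ∨ j = t + 1 then 1 else 0

/-- Append a row to a matrix. -/
def appendRow {m n : ℕ} (A : Matrix (Fin m) (Fin n) ℝ) (a : Fin n → ℝ) :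
    Matrix (Fin (m+1)) (Fin n) ℝ :=
  fun t j => if h : (t : ℕ) < m then A ⟨t, h⟩ j else a j

/-- A set of points is integral if all its extreme points are integer vectors. -/
def IsIntegralSet {n : ℕ} (S : Set (Fin n → ℝ)) : Prop :=
  ∀ x ∈ S.extremePoints ℝ, ∀ j, ∃ z : ℤ, x j = z

/-- A binary matrix is minimally nonideal if `Q(A)` is not integral but both restrictions
`Q(A) ∩ {x_i = 0}` and `Q(A) ∩ {x_i = 1}` are integral for every coordinate `i`. -/
def MinimallyNonideal {m n : ℕ} (A : Matrix (Fin m) (Fin n) ℝ) : Prop :=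
  ¬ IsIntegralSet (polyQ A) ∧
  ∀ i : Fin n, IsIntegralSet (polyQ A ∩ {x | x i = 0}) ∧
               IsIntegralSet (polyQ A ∩ {x | x i = 1})

/-- The matrix of the degenerate projective plane with `t+1` points and lines. -/
def Jmat (t : ℕ) : Matrix (Fin (t+1)) (Fin (t+1)) ℝ :=
  fun i j => if i = 0 then (if j = 0 then 0 else 1) else (if j = 0 ∨ j = i then 1 else 0)

/-- `A` is isomorphic to some degenerate projective plane matrix `J_t`, `t ≥ 2`. -/
def IsoToDegenProjPlane {m n : ℕ} (A : Matrix (Fin m) (Fin n) ℝ) : Prop :=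
  ∃ t : ℕ, 2 ≤ t ∧ ∃ (σ : Fin m ≃ Fin (t+1)) (τ : Fin n ≃ Fin (t+1)),
    ∀ i j, A i j = Jmat t (σ i) (τ j)

/-- `A₁` is the core of `A`: a square nonsingular row submatrix with `r` ones per row and
per column, all other rows of `A` having more than `r` ones. -/
def IsCore {m n : ℕ} (A : Matrix (Fin m) (Fin n) ℝ) (A₁ : Matrix (Fin n) (Fin n) ℝ)
    (r : ℕ) : Prop :=
  2 ≤ r ∧ A₁.det ≠ 0 ∧
  (∃ f : Fin n → Fin m, Function.Injective f ∧ (∀ i, A₁ i = A (f i)) ∧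
    ∀ t, t ∉ Set.range f → r < (rowSupp A t).ncard) ∧
  (∀ i, (rowSupp A₁ i).ncard = r) ∧ (∀ j, {i | A₁ i j ≠ 0}.ncard = r)

/-- `B₁` is the core of the blocker of `A`: a square nonsingular matrix whose rows are
binary vertices of `Q*(A)` with `s` ones per row and per column, all other binary
vertices of `Q*(A)` having more than `s` ones. -/
def IsBlockerCore {m n : ℕ} (A : Matrix (Fin m) (Fin n) ℝ) (B₁ : Matrix (Fin n) (Fin n) ℝ)
    (s : ℕ) : Prop :=
  2 ≤ s ∧ B₁.det ≠ 0 ∧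
  (∀ i, IsBinaryVec (B₁ i) ∧ IsVertex (Qstar A) (B₁ i)) ∧
  Function.Injective (fun i => B₁ i) ∧
  (∀ i, (rowSupp B₁ i).ncard = s) ∧ (∀ j, {i | B₁ i j ≠ 0}.ncard = s) ∧
  (∀ x, IsBinaryVec x → IsVertex (Qstar A) x → (∀ i, x ≠ B₁ i) → s < (supp x).ncard)

/-- `w^i` for `n = 3ν`: the complement of the characteristic vector of the residue class
`i` mod 3. -/
def wVec (n : ℕ) (i : Fin 3) : Fin n → ℝ :=
  fun k => if (k : ℕ) % 3 = (i : ℕ) then 0 else 1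

/-- `a^i` for `n = 3ν`: the characteristic vector of the residue class `i` mod 3
(`a¹ = (1,0,0,1,0,0,…)` corresponds to `i = 0`). -/
def aVec (n : ℕ) (i : ℕ) : Fin n → ℝ :=
  fun k => if (k : ℕ) % 3 = i then 1 else 0

/-!
Since `A ≥ 0`, `P` is an upper set, so no vertex of `P` lies below another one. Since `P` lies in
the nonnegative orthant, every point of `P` dominates a convex combination of vertices.

If `[v, v']` is an edge and `y = ∑ λₖ uᵏ ≤ m := (v + v') / 2`, then `m` is the midpoint of `y`
and `2m - y ∈ P`, so `y` lies on the edge, hence so does every `uᵏ`, and the vertices on the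
edge are `v` and `v'`.

Conversely, let `z ∈ [v, v']` lie in the open segment `(x₁, x₂)` of `P`, and let `z'` be the
reflection of `z` in `m`. Dominating `x₁`, `x₂` and `z'` by convex combinations of vertices and
averaging gives a combination `≤ m`. The hypothesis forces it to be supported on `{v, v'}`, and
as `v`, `v'` are incomparable it equals `m`. Then every domination is an equality, and `x₁` is a
combination of `v` and `v'`.
-/

section ConvexGeometry

variable {E : Type*} [AddCommGroup E] [Module ℝ E]

theorem Convex.exists_add_sub_mem_of_notMem_extremePoints {s : Set E} (hs : Convex ℝ s)
    {x : E} (hx : x ∈ s) (hxs : x ∉ s.extremePoints ℝ) :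
    ∃ d ≠ 0, x + d ∈ s ∧ x - d ∈ s := by
  obtain ⟨a, ha, c, hc, ⟨p, q, hp, hq, hpq, rfl⟩, hax⟩ : ∃ a ∈ s, ∃ c ∈ s,
      x ∈ openSegment ℝ a c ∧ a ≠ x := by
    simpa [Set.extremePoints, hx] using hxs
  have hac : a ≠ c := by
    rintro rfl
    exact hax (by rw [← add_smul, hpq, one_smul])
  set ε := min p q
  have hε : 0 < ε := lt_min hp hq
  refine ⟨ε • (a - c), smul_ne_zero hε.ne' (sub_ne_zero.2 hac), ?_, ?_⟩
  · convert hs ha hc (by linarith : 0 ≤ p + ε) (by linarith [min_le_right p q] : 0 ≤ q - ε)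
      (by linarith) using 1
    module
  · convert hs ha hc (by linarith [min_le_left p q] : 0 ≤ p - ε) (by linarith : 0 ≤ q + ε)
      (by linarith) using 1
    module

theorem IsExtreme.mem_of_sum_smul_mem {A B : Set E} (hA : Convex ℝ A) (hAB : IsExtreme ℝ A B)
    {ι : Type*} {t : Finset ι} {w : ι → ℝ} {z : ι → E} (hw₀ : ∀ i ∈ t, 0 < w i)
    (hw₁ : ∑ i ∈ t, w i = 1) (hz : ∀ i ∈ t, z i ∈ A) (hB : ∑ i ∈ t, w i • z i ∈ B)
    {i : ι} (hi : i ∈ t) : z i ∈ B := by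
  classical
  rw [← add_sum_erase t _ hi] at hw₁ hB
  rcases (t.erase i).eq_empty_or_nonempty with h | h
  · simp only [h, sum_empty, add_zero] at hw₁ hB
    rwa [hw₁, one_smul] at hB
  have hpos : 0 < ∑ j ∈ t.erase i, w j :=
    sum_pos (fun j hj => hw₀ j (mem_of_mem_erase hj)) h
  refine hAB.left_mem_of_mem_openSegment (hz i hi)
    (hA.centerMass_mem (fun j hj => (hw₀ j (mem_of_mem_erase hj)).le) hpos
      (fun j hj => hz j (mem_of_mem_erase hj))) hB
    ⟨w i, _, hw₀ i hi, hpos, hw₁, ?_⟩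
  rw [centerMass, smul_inv_smul₀ hpos.ne']

variable [PartialOrder E] [IsOrderedAddMonoid E]

theorem IsUpperSet.eq_of_le_of_mem_extremePoints {s : Set E} (hs : IsUpperSet s) {x y : E}
    (hx : x ∈ s.extremePoints ℝ) (hy : y ∈ s) (hyx : y ≤ x) : y = x := by
  have hz : x + (x - y) ∈ s := hs (le_add_of_nonneg_right (sub_nonneg.2 hyx)) hx.1
  refine hx.2 hy hz ⟨1 / 2, 1 / 2, by norm_num, by norm_num, by norm_num, ?_⟩
  module

theorem eq_midpoint_of_mem_segment_of_le [PosSMulReflectLE ℝ E] {v v' w : E}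
    (hvv' : ¬ v ≤ v') (hv'v : ¬ v' ≤ v) (hw : w ∈ segment ℝ v v')
    (hle : w ≤ midpoint ℝ v v') : w = midpoint ℝ v v' := by
  obtain ⟨a, c, -, -, hac, rfl⟩ := hw
  obtain rfl : c = 1 - a := by linarith
  have hdiff : midpoint ℝ v v' - (a • v + (1 - a) • v') = (1 / 2 - a) • (v - v') := by
    rw [midpoint_eq_smul_add, invOf_eq_inv]
    module
  have hnonneg : 0 ≤ (1 / 2 - a) • (v - v') := hdiff ▸ sub_nonneg.2 hle
  obtain rfl : a = 1 / 2 := by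
    by_contra hne
    rcases lt_or_gt_of_ne hne with h | h
    · exact hv'v (sub_nonneg.1 (nonneg_of_smul_nonneg_of_pos_left hnonneg (by linarith)))
    · rw [show (1 / 2 - a) • (v - v') = (a - 1 / 2) • (v' - v) by module] at hnonneg
      exact hvv' (sub_nonneg.1 (nonneg_of_smul_nonneg_of_pos_left hnonneg (by linarith)))
  rw [midpoint_eq_smul_add, invOf_eq_inv]
  module

theorem eq_of_le_of_le_of_smul_add_smul_eq [PosSMulMono ℝ E] [PosSMulReflectLE ℝ E]
    {a a' c c' : E} (ha : a ≤ a') (hc : c ≤ c') {p q : ℝ} (hp : 0 < p) (hq : 0 ≤ q)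
    (h : p • a + q • c = p • a' + q • c') : a = a' := by
  have h0 : p • (a' - a) + q • (c' - c) = 0 := by
    rw [smul_sub, smul_sub, sub_add_sub_comm, ← h, sub_self]
  obtain ⟨h₁, -⟩ := (add_eq_zero_iff_of_nonneg (smul_nonneg hp.le (sub_nonneg.2 ha))
    (smul_nonneg hq (sub_nonneg.2 hc))).1 h0
  exact (sub_eq_zero.1 ((smul_eq_zero.1 h₁).resolve_left hp.ne')).symm

end ConvexGeometry

theorem midpoint_apply {ι : Type*} (x y : ι → ℝ) (i : ι) :
    midpoint ℝ x y i = (x i + y i) / 2 := by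
  rw [pi_midpoint_apply, midpoint_eq_smul_add, invOf_eq_inv, smul_eq_mul, inv_mul_eq_div]

section ConvexWeights

variable {E : Type*}

def IsConvexWeights (s : Set E) (γ : E →₀ ℝ) : Prop :=
  0 ≤ γ ∧ ↑γ.support ⊆ s ∧ γ.sum (fun _ c => c) = 1

variable {s : Set E} {γ δ : E →₀ ℝ}

theorem isConvexWeights_single {x : E} (hx : x ∈ s) :
    IsConvexWeights s (Finsupp.single x 1) := by
  classical
  refine ⟨fun y => ?_, by simpa using hx, by simp⟩
  rw [Finsupp.single_apply]
  split_ifs <;> norm_num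

theorem IsConvexWeights.add_smul (hγ : IsConvexWeights s γ) (hδ : IsConvexWeights s δ)
    {a c : ℝ} (ha : 0 ≤ a) (hc : 0 ≤ c) (hac : a + c = 1) :
    IsConvexWeights s (a • γ + c • δ) := by
  classical
  refine ⟨add_nonneg (smul_nonneg ha hγ.1) (smul_nonneg hc hδ.1), fun x hx => ?_, ?_⟩
  · rcases mem_union.1 (Finsupp.support_add hx) with h | h
    · exact hγ.2.1 (Finsupp.support_smul h)
    · exact hδ.2.1 (Finsupp.support_smul h)
  · rw [Finsupp.sum_add_index' (fun _ => rfl) (fun _ _ _ => rfl),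
      Finsupp.sum_smul_index' (fun _ => rfl), Finsupp.sum_smul_index' (fun _ => rfl)]
    simp only [smul_eq_mul, ← Finsupp.mul_sum, hγ.2.2, hδ.2.2, mul_one, hac]

theorem Finsupp.support_subset_support_smul_add (hγ : 0 ≤ γ) (hδ : 0 ≤ δ) {a : ℝ}
    (ha : 0 < a) : γ.support ⊆ (a • γ + δ).support := by
  intro x hx
  have hγx : 0 < γ x := (hγ x).lt_of_ne' (Finsupp.mem_support_iff.1 hx)
  rw [Finsupp.mem_support_iff, Finsupp.add_apply, Finsupp.smul_apply, smul_eq_mul]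
  exact (add_pos_of_pos_of_nonneg (mul_pos ha hγx) (hδ x)).ne'

variable [AddCommGroup E] [Module ℝ E]

theorem IsConvexWeights.linearCombination_mem_convexHull (hγ : IsConvexWeights s γ) :
    Finsupp.linearCombination ℝ id γ ∈ convexHull ℝ s := by
  rw [Finsupp.linearCombination_apply]
  exact (convex_convexHull ℝ s).sum_mem (fun x _ => hγ.1 x) hγ.2.2
    (fun x hx => subset_convexHull ℝ s (hγ.2.1 hx))

theorem IsConvexWeights.linearCombination_mem_segment {v v' : E}
    (hγ : IsConvexWeights s γ) (hsupp : ↑γ.support ⊆ ({v, v'} : Set E)) :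
    Finsupp.linearCombination ℝ id γ ∈ segment ℝ v v' :=
  convexHull_pair (𝕜 := ℝ) v v' ▸
    IsConvexWeights.linearCombination_mem_convexHull ⟨hγ.1, hsupp, hγ.2.2⟩

theorem convex_setOf_exists_isConvexWeights_le [PartialOrder E] [IsOrderedAddMonoid E]
    [PosSMulMono ℝ E] (s : Set E) :
    Convex ℝ {x | ∃ γ, IsConvexWeights s γ ∧ Finsupp.linearCombination ℝ id γ ≤ x} := by
  rintro x ⟨γ, hγ, hx⟩ y ⟨δ, hδ, hy⟩ a c ha hc hac
  refine ⟨a • γ + c • δ, hγ.add_smul hδ ha hc hac, ?_⟩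
  simp only [map_add, map_smul]
  gcongr

end ConvexWeights

theorem exists_pos_add_mul_nonneg_ssubset {ι : Type*} [Fintype ι] {s r : ι → ℝ}
    (hs : ∀ k, 0 ≤ s k) (hsr : ∀ k, s k = 0 → r k = 0) (hr : ∃ k, r k < 0) :
    ∃ t > 0, (∀ k, 0 ≤ s k + t * r k) ∧ {k | 0 < s k + t * r k} ⊂ {k | 0 < s k} := by
  classical
  obtain ⟨k₀, hk₀, hmin⟩ := (univ.filter fun k => r k < 0).exists_min_image
    (fun k => s k / -r k) (by simpa [Finset.filter_nonempty_iff] using hr)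
  simp only [mem_filter, mem_univ, true_and] at hk₀ hmin
  have hs₀ : 0 < s k₀ := (hs k₀).lt_of_ne fun h => hk₀.ne (hsr k₀ h.symm)
  have ht : 0 < s k₀ / -r k₀ := div_pos hs₀ (neg_pos.2 hk₀)
  refine ⟨s k₀ / -r k₀, ht, fun k => ?_, fun k hk => ?_, fun h => ?_⟩
  · rcases lt_or_ge (r k) 0 with hk | hk
    · linarith [(le_div_iff₀ (neg_pos.2 hk)).1 (hmin k hk)]
    · exact add_nonneg (hs k) (mul_nonneg ht.le hk)
  · by_contra h
    have h0 : s k = 0 := le_antisymm (not_lt.1 h) (hs k)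
    simp [h0, hsr k h0] at hk
  · have hr₀ : r k₀ ≠ 0 := hk₀.ne
    have hk₀' : 0 < s k₀ + s k₀ / -r k₀ * r k₀ := h hs₀
    exact hk₀'.ne' (by field_simp; ring)

section Polyhedron

open Matrix

variable {m n : ℕ} {A : Matrix (Fin m) (Fin n) ℝ} {b : Fin m → ℝ}

theorem polyP_eq_preimage_inter_Ici (A : Matrix (Fin m) (Fin n) ℝ) (b : Fin m → ℝ) :
    polyP A b = A.mulVecLin ⁻¹' Set.Ici b ∩ Set.Ici 0 := rfl

theorem convex_polyP : Convex ℝ (polyP A b) := by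
  rw [polyP_eq_preimage_inter_Ici]
  exact ((convex_Ici b).linear_preimage _).inter (convex_Ici 0)

theorem isUpperSet_polyP (hA : ∀ i j, 0 ≤ A i j) : IsUpperSet (polyP A b) :=
  fun _ _ hxy hx => ⟨fun i => (hx.1 i).trans (sum_le_sum fun j _ =>
    mul_le_mul_of_nonneg_left (hxy j) (hA i j)), fun j => (hx.2 j).trans (hxy j)⟩

/-- The constraints of `polyP A b`, indexed by rows and coordinates; `polySlack A 0 k` is the
linear part of the affine map `polySlack A b k`. -/
def polySlack (A : Matrix (Fin m) (Fin n) ℝ) (b : Fin m → ℝ) :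
    Fin m ⊕ Fin n → (Fin n → ℝ) → ℝ
  | .inl i, x => (A *ᵥ x) i - b i
  | .inr j, x => x j

theorem mem_polyP_iff_forall_polySlack_nonneg {x : Fin n → ℝ} :
    x ∈ polyP A b ↔ ∀ k, 0 ≤ polySlack A b k x := by
  simp only [Sum.forall, polySlack, sub_nonneg]
  exact Iff.rfl

theorem polySlack_add_smul (k : Fin m ⊕ Fin n) (x d : Fin n → ℝ) (t : ℝ) :
    polySlack A b k (x + t • d) = polySlack A b k x + t * polySlack A 0 k d := by
  cases k
  · simp only [polySlack, mulVec_add, mulVec_smul, Pi.add_apply, Pi.smul_apply, smul_eq_mul,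
      Pi.zero_apply]
    ring
  · simp [polySlack]

theorem polySlack_eq_zero_of_add_mem_of_sub_mem {x d : Fin n → ℝ} (hxd : x + d ∈ polyP A b)
    (hxd' : x - d ∈ polyP A b) {k : Fin m ⊕ Fin n} (hk : polySlack A b k x = 0) :
    polySlack A 0 k d = 0 := by
  have h₁ := mem_polyP_iff_forall_polySlack_nonneg.1 (one_smul ℝ d ▸ hxd) k
  have h₂ := mem_polyP_iff_forall_polySlack_nonneg.1
    (show x + (-1 : ℝ) • d ∈ polyP A b by rwa [neg_one_smul, ← sub_eq_add_neg]) k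
  rw [polySlack_add_smul, hk] at h₁ h₂
  linarith

theorem exists_add_smul_mem_polyP_ncard_lt {x d : Fin n → ℝ} (hx : x ∈ polyP A b)
    (hflat : ∀ k, polySlack A b k x = 0 → polySlack A 0 k d = 0)
    (hd : ∃ k, polySlack A 0 k d < 0) :
    ∃ t : ℝ, 0 < t ∧ x + t • d ∈ polyP A b ∧
      {k | 0 < polySlack A b k (x + t • d)}.ncard < {k | 0 < polySlack A b k x}.ncard := by
  obtain ⟨t, ht, hnonneg, hsub⟩ := exists_pos_add_mul_nonneg_ssubset
    (mem_polyP_iff_forall_polySlack_nonneg.1 hx) hflat hd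
  simp only [← polySlack_add_smul] at hnonneg hsub
  exact ⟨t, ht, mem_polyP_iff_forall_polySlack_nonneg.2 hnonneg,
    Set.ncard_lt_ncard hsub (Set.toFinite _)⟩

theorem exists_isConvexWeights_le_of_mem_polyP {x : Fin n → ℝ} (hx : x ∈ polyP A b) :
    ∃ γ, IsConvexWeights ((polyP A b).extremePoints ℝ) γ ∧
      Finsupp.linearCombination ℝ id γ ≤ x := by
  set W := {x | ∃ γ, IsConvexWeights ((polyP A b).extremePoints ℝ) γ ∧
    Finsupp.linearCombination ℝ id γ ≤ x}
  change x ∈ W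
  have hW : Convex ℝ W := convex_setOf_exists_isConvexWeights_le _
  have hWup : IsUpperSet W := fun _ _ hyz ⟨γ, hγ, hy⟩ => ⟨γ, hγ, hy.trans hyz⟩
  -- A non-vertex `x` moves along a line inside its tight constraints until a new constraint
  -- becomes tight; `x` lies between two such points, or dominates one of them.
  induction hN : {k | 0 < polySlack A b k x}.ncard using Nat.strong_induction_on
    generalizing x with | _ N ih => ?_
  by_cases hvx : x ∈ (polyP A b).extremePoints ℝ
  · exact ⟨_, isConvexWeights_single hvx, by simp⟩
  obtain ⟨d, hd0, hxd, hxd'⟩ := convex_polyP.exists_add_sub_mem_of_notMem_extremePoints hx hvx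
  have step : ∀ e, x + e ∈ polyP A b → x - e ∈ polyP A b → (∃ k, polySlack A 0 k e < 0) →
      ∃ t : ℝ, 0 < t ∧ x + t • e ∈ W := by
    intro e hxe hxe' he
    obtain ⟨t, ht, hmem, hlt⟩ := exists_add_smul_mem_polyP_ncard_lt hx
      (fun k => polySlack_eq_zero_of_add_mem_of_sub_mem hxe hxe') he
    exact ⟨t, ht, ih _ (hN ▸ hlt) hmem rfl⟩
  have below : ∀ e, x + e ∈ polyP A b → x - e ∈ polyP A b → e ≠ 0 →
      (∀ k, 0 ≤ polySlack A 0 k e) → x ∈ W := by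
    intro e hxe hxe' he0 he
    have he' : 0 ≤ e := fun j => he (.inr j)
    obtain ⟨j, hj⟩ : ∃ j, e j ≠ 0 := by simpa [funext_iff] using he0
    obtain ⟨t, ht, hW'⟩ := step (-e) (by rwa [← sub_eq_add_neg]) (by rwa [sub_neg_eq_add])
      ⟨.inr j, by simpa [polySlack] using (he' j).lt_of_ne' hj⟩
    exact hWup (add_le_of_nonpos_right (smul_nonpos_of_nonneg_of_nonpos ht.le
      (neg_nonpos.2 he'))) hW'
  by_cases hpos : ∀ k, 0 ≤ polySlack A 0 k d
  · exact below d hxd hxd' hd0 hpos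
  by_cases hneg : ∀ k, 0 ≤ polySlack A 0 k (-d)
  · exact below (-d) (by rwa [← sub_eq_add_neg]) (by rwa [sub_neg_eq_add]) (neg_ne_zero.2 hd0)
      hneg
  push Not at hpos hneg
  obtain ⟨t₁, ht₁, h₁⟩ := step d hxd hxd' hpos
  obtain ⟨t₂, ht₂, h₂⟩ := step (-d) (by rwa [← sub_eq_add_neg]) (by rwa [sub_neg_eq_add]) hneg
  refine hW.segment_subset h₁ h₂ ⟨t₂ / (t₁ + t₂), t₁ / (t₁ + t₂), by positivity, by positivity,
    by rw [← add_div, add_comm, div_self (by positivity)], ?_⟩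
  have : t₁ + t₂ ≠ 0 := by positivity
  match_scalars <;> field_simp <;> ring

end Polyhedron

def OnlyPairBelowMidpoint {n : ℕ} (S : Set (Fin n → ℝ)) (v v' : Fin n → ℝ) : Prop :=
  ∀ (L : ℕ) (u : Fin L → (Fin n → ℝ)) (lam : Fin L → ℝ),
    (∀ k, IsVertex S (u k)) → Function.Injective u →
    (∀ k, 0 < lam k ∧ lam k < 1) → ∑ k, lam k = 1 →
    (∀ j, ∑ k, lam k * u k j ≤ (v j + v' j) / 2) →
    L = 2 ∧ Set.range u = {v, v'}

namespace OnlyPairBelowMidpoint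

variable {n : ℕ} {S : Set (Fin n → ℝ)} {v v' : Fin n → ℝ}

theorem finset_coe_eq_pair (H : OnlyPairBelowMidpoint S v v') {F : Finset (Fin n → ℝ)}
    {w : (Fin n → ℝ) → ℝ} (hF : ∀ x ∈ F, IsVertex S x) (hw : ∀ x ∈ F, 0 < w x ∧ w x < 1)
    (hw₁ : ∑ x ∈ F, w x = 1) (hle : ∑ x ∈ F, w x • x ≤ midpoint ℝ v v') :
    (F : Set (Fin n → ℝ)) = {v, v'} := by
  set e := F.equivFin
  have hsum {M : Type} [AddCommMonoid M] (f : (Fin n → ℝ) → M) :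
      ∑ k, f (e.symm k) = ∑ x ∈ F, f x := by
    rw [e.symm.sum_comp (fun x : F => f x), sum_coe_sort]
  obtain ⟨-, hrange⟩ := H F.card (fun k => e.symm k) (fun k => w (e.symm k))
    (fun k => hF _ (e.symm k).2) (Subtype.val_injective.comp e.symm.injective)
    (fun k => hw _ (e.symm k).2) (by rw [hsum w, hw₁])
    (fun j => by
      rw [hsum fun x => w x * x j, ← midpoint_apply]
      simpa [Finset.sum_apply] using hle j)
  rw [← hrange]
  ext x
  exact ⟨fun hx => ⟨e ⟨x, hx⟩, by simp⟩, by rintro ⟨k, rfl⟩; exact (e.symm k).2⟩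

theorem support_subset_pair (H : OnlyPairBelowMidpoint S v v') (hne : v ≠ v')
    (hv : IsVertex S v) (hv' : IsVertex S v') {γ : (Fin n → ℝ) →₀ ℝ}
    (hγ : IsConvexWeights (S.extremePoints ℝ) γ)
    (hle : Finsupp.linearCombination ℝ id γ ≤ midpoint ℝ v v') :
    (γ.support : Set (Fin n → ℝ)) ⊆ {v, v'} := by
  classical
  -- mixing in `v` and `v'` gives at least two support points, so that all weights are `< 1`
  set ε : (Fin n → ℝ) →₀ ℝ :=
    (1 / 2 : ℝ) • Finsupp.single v 1 + (1 / 2 : ℝ) • Finsupp.single v' 1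
  have hε : IsConvexWeights (S.extremePoints ℝ) ε := (isConvexWeights_single hv).add_smul
    (isConvexWeights_single hv') (by norm_num) (by norm_num) (by norm_num)
  set δ := (1 / 2 : ℝ) • γ + (1 / 2 : ℝ) • ε
  have hδ : IsConvexWeights (S.extremePoints ℝ) δ :=
    hγ.add_smul hε (by norm_num) (by norm_num) (by norm_num)
  have hsum : ∑ x ∈ δ.support, δ x = 1 := hδ.2.2
  have hpos : ∀ x ∈ δ.support, 0 < δ x := fun x hx =>
    (hδ.1 x).lt_of_ne' (Finsupp.mem_support_iff.1 hx)
  have hεδ : ε.support ⊆ δ.support := by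
    rw [show δ = (1 / 2 : ℝ) • ε + (1 / 2 : ℝ) • γ from add_comm _ _]
    exact Finsupp.support_subset_support_smul_add hε.1 (smul_nonneg (by norm_num) hγ.1)
      (by norm_num)
  have hvδ : v ∈ δ.support := hεδ (by simp [ε, hne])
  have hv'δ : v' ∈ δ.support := hεδ (by simp [ε, hne.symm])
  have hδle : Finsupp.linearCombination ℝ id δ ≤ midpoint ℝ v v' := by
    have hεmid : Finsupp.linearCombination ℝ id ε = midpoint ℝ v v' := by
      simp [ε, midpoint_eq_smul_add, smul_add]
    calc Finsupp.linearCombination ℝ id δ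
        = (1 / 2 : ℝ) • Finsupp.linearCombination ℝ id γ + (1 / 2 : ℝ) • midpoint ℝ v v' := by
          simp only [δ, map_add, map_smul, hεmid]
      _ ≤ (1 / 2 : ℝ) • midpoint ℝ v v' + (1 / 2 : ℝ) • midpoint ℝ v v' := by gcongr
      _ = midpoint ℝ v v' := by module
  refine (Finset.coe_subset.2 (Finsupp.support_subset_support_smul_add hγ.1
    (smul_nonneg (by norm_num) hε.1) (by norm_num))).trans
    (H.finset_coe_eq_pair (fun x hx => hδ.2.1 hx) (fun x hx => ⟨hpos x hx, ?_⟩) hsum ?_).le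
  · obtain ⟨y, hy, hyx⟩ : ∃ y ∈ δ.support, y ≠ x := by
      by_cases hxv : x = v
      · exact ⟨v', hv'δ, hxv ▸ hne.symm⟩
      · exact ⟨v, hvδ, Ne.symm hxv⟩
    exact hsum ▸ single_lt_sum hyx hx hy (hpos y hy) fun z hz _ => (hpos z hz).le
  · simpa [Finsupp.linearCombination_apply, Finsupp.sum] using hδle

end OnlyPairBelowMidpoint

section Adjacency

variable {m n : ℕ} {A : Matrix (Fin m) (Fin n) ℝ} {b : Fin m → ℝ} {v v' : Fin n → ℝ}

theorem AdjacentVerts.onlyPairBelowMidpoint (hA : ∀ i j, 0 ≤ A i j)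
    (hadj : AdjacentVerts (polyP A b) v v') : OnlyPairBelowMidpoint (polyP A b) v v' := by
  obtain ⟨hne, hv, hv', hF⟩ := hadj
  intro L u lam hu hinj hlam hsum hle
  set y := ∑ k, lam k • u k
  have hyP : y ∈ polyP A b :=
    convex_polyP.sum_mem (fun k _ => (hlam k).1.le) hsum (fun k _ => (hu k).1)
  have hymid : y ≤ midpoint ℝ v v' := fun j => by
    simp only [y, Finset.sum_apply, Pi.smul_apply, smul_eq_mul, midpoint_apply]
    exact hle j
  have hmidF : midpoint ℝ v v' ∈ segment ℝ v v' := midpoint_mem_segment v v'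
  have hyF : y ∈ segment ℝ v v' :=
    hF.left_mem_of_mem_openSegment hyP ((isUpperSet_polyP hA)
      (le_add_of_nonneg_right (sub_nonneg.2 hymid)) (hF.subset hmidF)) hmidF
      ⟨1 / 2, 1 / 2, by norm_num, by norm_num, by norm_num, by module⟩
  have huv : ∀ k, u k = v ∨ u k = v' := fun k =>
    ((mem_extremePoints_iff_forall_segment.1 (hu k)).2 v hv.1 v' hv'.1
      (hF.mem_of_sum_smul_mem convex_polyP (fun k _ => (hlam k).1) hsum (fun k _ => (hu k).1)
        hyF (mem_univ k))).imp Eq.symm Eq.symm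
  have hrange : Set.range u ⊆ {v, v'} := by
    rintro _ ⟨k, rfl⟩
    exact huv k
  have hL : 2 ≤ L := by
    rcases L with _ | _ | L
    · simp at hsum
    · simp at hsum
      linarith [(hlam 0).2]
    · omega
  have hcard : (Set.range u).ncard = L := by rw [Set.ncard_range_of_injective hinj, Nat.card_fin]
  have hL' : L ≤ 2 := hcard ▸ Set.ncard_pair hne ▸ Set.ncard_le_ncard hrange
  obtain rfl : L = 2 := by omega
  exact ⟨rfl, Set.eq_of_subset_of_ncard_le hrange (by rw [hcard, Set.ncard_pair hne])⟩

theorem OnlyPairBelowMidpoint.linearCombination_eq_midpoint (hA : ∀ i j, 0 ≤ A i j)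
    (H : OnlyPairBelowMidpoint (polyP A b) v v') (hne : v ≠ v')
    (hv : IsVertex (polyP A b) v) (hv' : IsVertex (polyP A b) v') {γ : (Fin n → ℝ) →₀ ℝ}
    (hγ : IsConvexWeights ((polyP A b).extremePoints ℝ) γ)
    (hle : Finsupp.linearCombination ℝ id γ ≤ midpoint ℝ v v') :
    Finsupp.linearCombination ℝ id γ = midpoint ℝ v v' ∧ ↑γ.support ⊆ ({v, v'} : Set _) := by
  have hsupp := H.support_subset_pair hne hv hv' hγ hle
  refine ⟨eq_midpoint_of_mem_segment_of_le ?_ ?_ (hγ.linearCombination_mem_segment hsupp) hle,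
    hsupp⟩
  · exact fun h => hne ((isUpperSet_polyP hA).eq_of_le_of_mem_extremePoints hv' hv.1 h)
  · exact fun h => hne ((isUpperSet_polyP hA).eq_of_le_of_mem_extremePoints hv hv'.1 h).symm

theorem OnlyPairBelowMidpoint.left_mem_segment (hA : ∀ i j, 0 ≤ A i j)
    (H : OnlyPairBelowMidpoint (polyP A b) v v') (hne : v ≠ v')
    (hv : IsVertex (polyP A b) v) (hv' : IsVertex (polyP A b) v') {x₁ x₂ z : Fin n → ℝ}
    (hx₁ : x₁ ∈ polyP A b) (hx₂ : x₂ ∈ polyP A b) (hz : z ∈ segment ℝ v v')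
    (hzx : z ∈ openSegment ℝ x₁ x₂) : x₁ ∈ segment ℝ v v' := by
  obtain ⟨θ, θ', hθ, hθ', hθθ', rfl⟩ := hz
  obtain ⟨p, q, hp, hq, hpq, hpx⟩ := hzx
  -- the reflection of `z` in the midpoint of `[v, v']`
  set zb := θ' • v + θ • v'
  have hzb : zb ∈ polyP A b := convex_polyP hv.1 hv'.1 hθ' hθ (by linarith)
  have hmid : (1 / 2 : ℝ) • (p • x₁ + q • x₂) + (1 / 2 : ℝ) • zb = midpoint ℝ v v' := by
    obtain rfl : θ' = 1 - θ := by linarith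
    rw [hpx, midpoint_eq_smul_add, invOf_eq_inv]
    module
  set L := Finsupp.linearCombination ℝ (id : (Fin n → ℝ) → Fin n → ℝ)
  obtain ⟨γ₁, hγ₁, hc₁⟩ := exists_isConvexWeights_le_of_mem_polyP hx₁
  obtain ⟨γ₂, hγ₂, hc₂⟩ := exists_isConvexWeights_le_of_mem_polyP hx₂
  obtain ⟨γ₃, hγ₃, hc₃⟩ := exists_isConvexWeights_le_of_mem_polyP hzb
  set γ := (1 / 2 : ℝ) • (p • γ₁ + q • γ₂) + (1 / 2 : ℝ) • γ₃
  have hγ : IsConvexWeights _ γ := (hγ₁.add_smul hγ₂ hp.le hq.le hpq).add_smul hγ₃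
    (by norm_num) (by norm_num) (by norm_num)
  have hLγ : L γ = (1 / 2 : ℝ) • (p • L γ₁ + q • L γ₂) + (1 / 2 : ℝ) • L γ₃ := by
    simp only [γ, map_add, map_smul]
  have hc₁₂ : p • L γ₁ + q • L γ₂ ≤ p • x₁ + q • x₂ := by gcongr
  obtain ⟨hLmid, hsupp⟩ := H.linearCombination_eq_midpoint hA hne hv hv' hγ
    (by rw [hLγ, ← hmid]; gcongr)
  have h₁ : L γ₁ = x₁ := eq_of_le_of_le_of_smul_add_smul_eq hc₁ hc₂ hp hq.le
    (eq_of_le_of_le_of_smul_add_smul_eq hc₁₂ hc₃ (by norm_num) (by norm_num)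
      (hLγ ▸ hmid ▸ hLmid))
  rw [← h₁]
  refine hγ₁.linearCombination_mem_segment (subset_trans (Finset.coe_subset.2 ?_) hsupp)
  exact (Finsupp.support_subset_support_smul_add hγ₁.1 (smul_nonneg hq.le hγ₂.1) hp).trans
    (Finsupp.support_subset_support_smul_add (add_nonneg (smul_nonneg hp.le hγ₁.1)
      (smul_nonneg hq.le hγ₂.1)) (smul_nonneg (by norm_num) hγ₃.1) (by norm_num))

theorem OnlyPairBelowMidpoint.adjacentVerts (hA : ∀ i j, 0 ≤ A i j)
    (H : OnlyPairBelowMidpoint (polyP A b) v v') (hne : v ≠ v')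
    (hv : IsVertex (polyP A b) v) (hv' : IsVertex (polyP A b) v') :
    AdjacentVerts (polyP A b) v v' :=
  ⟨hne, hv, hv', convex_polyP.segment_subset hv.1 hv'.1,
    fun _ hx₁ _ hx₂ _ hz hzx => H.left_mem_segment hA hne hv hv' hx₁ hx₂ hz hzx⟩

end Adjacency

theorem stmt0_general {m n : ℕ} (A : Matrix (Fin m) (Fin n) ℝ) (b : Fin m → ℝ)
    (hA : ∀ i j, 0 ≤ A i j)
    (v v' : Fin n → ℝ) (hne : v ≠ v')
    (hv : IsVertex (polyP A b) v) (hv' : IsVertex (polyP A b) v') :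
    AdjacentVerts (polyP A b) v v' ↔
      ∀ (L : ℕ) (u : Fin L → (Fin n → ℝ)) (lam : Fin L → ℝ),
        (∀ k, IsVertex (polyP A b) (u k)) → Function.Injective u →
        (∀ k, 0 < lam k ∧ lam k < 1) → ∑ k, lam k = 1 →
        (∀ j, ∑ k, lam k * u k j ≤ (v j + v' j) / 2) →
        L = 2 ∧ Set.range u = {v, v'} :=
  ⟨fun hadj => hadj.onlyPairBelowMidpoint hA,
    fun H => OnlyPairBelowMidpoint.adjacentVerts hA H hne hv hv'⟩

/-- vertices `v ≠ v'` of `P = {x | Ax ≥ b, x ≥ 0}` (with `A ≥ 0`, `b ≥ 0`)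
are adjacent iff every strict convex combination of vertices of `P` dominated by
`(v+v')/2` consists exactly of `v` and `v'`. -/
theorem stmt0 {m n : ℕ} (A : Matrix (Fin m) (Fin n) ℝ) (b : Fin m → ℝ)
    (hA : ∀ i j, 0 ≤ A i j) (hb : ∀ i, 0 ≤ b i)
    (v v' : Fin n → ℝ) (hne : v ≠ v')
    (hv : IsVertex (polyP A b) v) (hv' : IsVertex (polyP A b) v') :
    AdjacentVerts (polyP A b) v v' ↔
      ∀ (L : ℕ) (u : Fin L → (Fin n → ℝ)) (lam : Fin L → ℝ),
        (∀ k, IsVertex (polyP A b) (u k)) → Function.Injective u →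
        (∀ k, 0 < lam k ∧ lam k < 1) → ∑ k, lam k = 1 →
        (∀ j, ∑ k, lam k * u k j ≤ (v j + v' j) / 2) →
        L = 2 ∧ Set.range u = {v, v'} :=
  stmt0_general A b hA v v' hne hv hv'
end

section
/- Let A be a binary m×n matrix, v and v' distinct vertices of Q*(A), and G(v,v') their joint saturation graph. If y = Σ λ_k u^k is a strict convex combination of vertices u^1,…,u^ℓ of Q*(A) with y ≤ (v+v')/2, then for each k: (a) supp(u^k) ⊆ supp(v) ∪ supp(v'), and (b) |{p,p'} ∩ supp(u^k)| = 1 whenever p and p' are neighbors in G(v,v'). -/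
open Finset

/-! Vertices of `Q*(A)` are integer points, and in fact `0/1` vectors: at a coordinate `≥ 2`
one could step by `±1` and stay among the integer points, so the vertex would be a midpoint.
Part (a) holds since the nonnegative `y` vanishes outside `supp v ∪ supp v'`. For an edge
`pp'` of `G(v,v')` witnessed by a row `C`, both `v` and `v'` meet `C` exactly once, so
`C · y ≤ 1` while every `C · u^k ≥ 1`; hence `C · u^k = 1`, and by (a) the support of `u^k`
meets `C` only inside `{p, p'}`. -/

def coverSolutions {m n : ℕ} (A : Matrix (Fin m) (Fin n) ℝ) : Set (Fin n → ℝ) :=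
  {x | (∀ j, ∃ k : ℕ, x j = k) ∧ ∀ i, 1 ≤ ∑ j, A i j * x j}

lemma eq_zero_of_sub_mem_of_add_mem {E : Type*} [AddCommGroup E] [Module ℝ E] {S : Set E}
    {x d : E} (hx : x ∈ S.extremePoints ℝ) (hsub : x - d ∈ S) (hadd : x + d ∈ S) : d = 0 := by
  have hmid : x ∈ openSegment ℝ (x - d) (x + d) :=
    ⟨1 / 2, 1 / 2, by norm_num, by norm_num, by norm_num, by module⟩
  simpa using ((mem_extremePoints.1 hx).2 _ hsub _ hadd hmid).1

lemma sum_eq_ncard_supp {n : ℕ} {z : Fin n → ℝ} (hz : IsBinaryVec z) :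
    ∑ j, z j = ((supp z).ncard : ℝ) := by
  have hz' : ∀ j, z j = if z j ≠ 0 then 1 else 0 := fun j => by
    rcases hz j with h | h <;> simp [h]
  rw [Finset.sum_congr rfl fun j _ => hz' j, Finset.sum_boole, supp,
    Set.ncard_eq_toFinset_card', Set.toFinset_ofPred]

lemma Set.inter_eq_pair_inter_of_inter_eq_singleton {α : Type*} {C V V' W : Set α} {p p' : α}
    (h₁ : C ∩ V = {p}) (h₂ : C ∩ V' = {p'}) (hW : W ⊆ V ∪ V') : C ∩ W = {p, p'} ∩ W := by
  ext j
  simp only [Set.ext_iff, Set.mem_inter_iff, Set.mem_singleton_iff] at h₁ h₂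
  simp only [Set.mem_inter_iff, Set.mem_insert_iff, Set.mem_singleton_iff]
  constructor
  · rintro ⟨hC, hjW⟩
    rcases hW hjW with hV | hV'
    · exact ⟨Or.inl ((h₁ j).1 ⟨hC, hV⟩), hjW⟩
    · exact ⟨Or.inr ((h₂ j).1 ⟨hC, hV'⟩), hjW⟩
  · rintro ⟨rfl | rfl, hjW⟩
    · exact ⟨((h₁ j).2 rfl).1, hjW⟩
    · exact ⟨((h₂ j).2 rfl).1, hjW⟩

section CoverSolutions

variable {m n : ℕ} {A : Matrix (Fin m) (Fin n) ℝ}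

lemma IsBinaryMatrix.nonneg (hA : IsBinaryMatrix A) (i : Fin m) (j : Fin n) : 0 ≤ A i j := by
  rcases hA i j with h | h <;> simp [h]

lemma IsBinaryMatrix.sum_mul_eq_ncard (hA : IsBinaryMatrix A) {x : Fin n → ℝ}
    (hx : IsBinaryVec x) (t : Fin m) :
    ∑ j, A t j * x j = ((rowSupp A t ∩ supp x).ncard : ℝ) := by
  have hprod : IsBinaryVec fun j => A t j * x j := fun j => by
    rcases hA t j with h | h <;> rcases hx j with h' | h' <;> simp [h, h']
  rw [sum_eq_ncard_supp hprod]
  congr 3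
  ext j
  simp [supp, rowSupp]

lemma coverSolutions_nonneg {x : Fin n → ℝ} (hx : x ∈ coverSolutions A) (j : Fin n) :
    0 ≤ x j := by
  obtain ⟨k, hk⟩ := hx.1 j
  exact hk ▸ k.cast_nonneg

lemma sum_mul_single (i : Fin m) (p : Fin n) :
    ∑ j, A i j * (Pi.single p 1 : Fin n → ℝ) j = A i p := by
  simp [Pi.single_apply]

lemma add_single_mem_coverSolutions (hA : IsBinaryMatrix A) {x : Fin n → ℝ}
    (hx : x ∈ coverSolutions A) (p : Fin n) : x + Pi.single p 1 ∈ coverSolutions A := by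
  refine ⟨fun j => ?_, fun i => ?_⟩
  · obtain ⟨k, hk⟩ := hx.1 j
    by_cases hj : j = p
    · exact ⟨k + 1, by subst hj; simp [hk]⟩
    · exact ⟨k, by simp [hj, hk]⟩
  · simp only [Pi.add_apply, mul_add, Finset.sum_add_distrib, sum_mul_single]
    linarith [hx.2 i, hA.nonneg i p]

lemma sub_single_mem_coverSolutions (hA : IsBinaryMatrix A) {x : Fin n → ℝ}
    (hx : x ∈ coverSolutions A) {p : Fin n} (hp : 2 ≤ x p) :
    x - Pi.single p 1 ∈ coverSolutions A := by
  refine ⟨fun j => ?_, fun i => ?_⟩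
  · obtain ⟨k, hk⟩ := hx.1 j
    by_cases hj : j = p
    · subst hj
      have hk1 : 1 ≤ k := by exact_mod_cast (show (1 : ℝ) ≤ k by linarith)
      exact ⟨k - 1, by simp [hk, Nat.cast_sub hk1]⟩
    · exact ⟨k, by simp [hj, hk]⟩
  · simp only [Pi.sub_apply, mul_sub, Finset.sum_sub_distrib, sum_mul_single]
    rcases hA i p with h | h
    · linarith [hx.2 i]
    · have hterm : A i p * x p ≤ ∑ j, A i j * x j :=
        Finset.single_le_sum (fun j _ => mul_nonneg (hA.nonneg i j) (coverSolutions_nonneg hx j))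
          (Finset.mem_univ p)
      rw [h] at hterm ⊢
      linarith

lemma IsVertex.mem_coverSolutions {x : Fin n → ℝ} (hx : IsVertex (Qstar A) x) :
    x ∈ coverSolutions A :=
  extremePoints_convexHull_subset hx

lemma IsVertex.isBinaryVec (hA : IsBinaryMatrix A) {x : Fin n → ℝ}
    (hx : IsVertex (Qstar A) x) : IsBinaryVec x := by
  have hxS := hx.mem_coverSolutions
  intro p
  obtain ⟨k, hk⟩ := hxS.1 p
  by_contra hbin
  have hp : 2 ≤ x p := by
    rw [hk] at hbin ⊢
    have : 2 ≤ k := by by_contra! h; interval_cases k <;> simp at hbin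
    exact_mod_cast this
  have hzero := eq_zero_of_sub_mem_of_add_mem hx
    (subset_convexHull ℝ _ (sub_single_mem_coverSolutions hA hxS hp))
    (subset_convexHull ℝ _ (add_single_mem_coverSolutions hA hxS p))
  simpa using congrFun hzero p

end CoverSolutions

lemma eq_of_le_of_sum_mul_le {ι : Type*} [Fintype ι] {lam f : ι → ℝ} {c : ℝ}
    (hlam : ∀ k, 0 < lam k) (hsum : ∑ k, lam k = 1) (hf : ∀ k, c ≤ f k)
    (hle : ∑ k, lam k * f k ≤ c) (k : ι) : f k = c := by
  have hterm : ∀ k ∈ Finset.univ, 0 ≤ lam k * (f k - c) := fun k _ =>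
    mul_nonneg (hlam k).le (sub_nonneg.2 (hf k))
  have hexcess : ∑ k, lam k * (f k - c) = 0 := by
    refine le_antisymm ?_ (Finset.sum_nonneg hterm)
    simp only [mul_sub, Finset.sum_sub_distrib, ← Finset.sum_mul, hsum]
    linarith
  have hk := (Finset.sum_eq_zero_iff_of_nonneg hterm).1 hexcess k (Finset.mem_univ k)
  have := (mul_eq_zero.1 hk).resolve_left (hlam k).ne'
  linarith

lemma supp_subset_union_of_sum_mul_le {ι : Type*} [Fintype ι] {n : ℕ} {u : ι → Fin n → ℝ}
    {lam : ι → ℝ} {v v' : Fin n → ℝ} (hu : ∀ k j, 0 ≤ u k j) (hlam : ∀ k, 0 < lam k)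
    (hle : ∀ j, ∑ k, lam k * u k j ≤ (v j + v' j) / 2) (k : ι) :
    supp (u k) ⊆ supp v ∪ supp v' := by
  intro j hj
  by_contra hjv
  simp only [supp, Set.mem_union, Set.mem_ofPred_eq, not_or, not_not] at hjv
  have hterm : ∀ k ∈ Finset.univ, 0 ≤ lam k * u k j := fun k _ => mul_nonneg (hlam k).le (hu k j)
  have hzero : ∑ k, lam k * u k j = 0 :=
    le_antisymm (by simpa [hjv.1, hjv.2] using hle j) (Finset.sum_nonneg hterm)
  have hk := (Finset.sum_eq_zero_iff_of_nonneg hterm).1 hzero k (Finset.mem_univ k)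
  exact hj ((mul_eq_zero.1 hk).resolve_left (hlam k).ne')

section SaturatedRow

variable {m n L : ℕ} {A : Matrix (Fin m) (Fin n) ℝ} {v v' : Fin n → ℝ}
  {u : Fin L → Fin n → ℝ} {lam : Fin L → ℝ} {t : Fin m} {p p' : Fin n}

lemma sum_mul_eq_one_of_inter_eq_singleton (hA : IsBinaryMatrix A) (hv : IsBinaryVec v)
    (hv' : IsBinaryVec v') (hu : ∀ k, u k ∈ coverSolutions A) (hlam : ∀ k, 0 < lam k)
    (hsum : ∑ k, lam k = 1) (hle : ∀ j, ∑ k, lam k * u k j ≤ (v j + v' j) / 2)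
    (h₁ : rowSupp A t ∩ supp v = {p}) (h₂ : rowSupp A t ∩ supp v' = {p'}) (k : Fin L) :
    ∑ j, A t j * u k j = 1 := by
  have hrow : ∑ j, A t j * ((v j + v' j) / 2) = 1 := by
    simp only [mul_div_assoc', mul_add, ← Finset.sum_div, Finset.sum_add_distrib,
      hA.sum_mul_eq_ncard hv, hA.sum_mul_eq_ncard hv', h₁, h₂, Set.ncard_singleton]
    norm_num
  have hcomb : ∑ k, lam k * ∑ j, A t j * u k j = ∑ j, A t j * ∑ k, lam k * u k j := by
    simp only [Finset.mul_sum]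
    rw [Finset.sum_comm]
    exact Finset.sum_congr rfl fun j _ => Finset.sum_congr rfl fun k _ => by ring
  refine eq_of_le_of_sum_mul_le hlam hsum (fun k => (hu k).2 t) ?_ k
  calc ∑ k, lam k * ∑ j, A t j * u k j = ∑ j, A t j * ∑ k, lam k * u k j := hcomb
    _ ≤ ∑ j, A t j * ((v j + v' j) / 2) :=
      Finset.sum_le_sum fun j _ => mul_le_mul_of_nonneg_left (hle j) (hA.nonneg t j)
    _ = 1 := hrow

lemma ncard_pair_inter_supp_eq_one (hA : IsBinaryMatrix A) (hv : IsBinaryVec v)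
    (hv' : IsBinaryVec v') (hu : ∀ k, u k ∈ coverSolutions A) (hub : ∀ k, IsBinaryVec (u k))
    (hlam : ∀ k, 0 < lam k) (hsum : ∑ k, lam k = 1)
    (hle : ∀ j, ∑ k, lam k * u k j ≤ (v j + v' j) / 2)
    (h₁ : rowSupp A t ∩ supp v = {p}) (h₂ : rowSupp A t ∩ supp v' = {p'}) (k : Fin L) :
    (({p, p'} : Set (Fin n)) ∩ supp (u k)).ncard = 1 := by
  have hsub := supp_subset_union_of_sum_mul_le (fun k => coverSolutions_nonneg (hu k)) hlam hle k
  have hone := sum_mul_eq_one_of_inter_eq_singleton hA hv hv' hu hlam hsum hle h₁ h₂ k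
  rw [hA.sum_mul_eq_ncard (hub k), Set.inter_eq_pair_inter_of_inter_eq_singleton h₁ h₂ hsub]
    at hone
  exact_mod_cast hone

end SaturatedRow

theorem stmt2_general {m n : ℕ} (A : Matrix (Fin m) (Fin n) ℝ) (hA : IsBinaryMatrix A)
    (v v' : Fin n → ℝ)
    (hv : IsVertex (Qstar A) v) (hv' : IsVertex (Qstar A) v')
    (L : ℕ) (u : Fin L → (Fin n → ℝ)) (lam : Fin L → ℝ)
    (hu : ∀ k, IsVertex (Qstar A) (u k))
    (hlam : ∀ k, 0 < lam k ∧ lam k < 1) (hsum : ∑ k, lam k = 1)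
    (hle : ∀ j, ∑ k, lam k * u k j ≤ (v j + v' j) / 2) :
    ∀ k, supp (u k) ⊆ supp v ∪ supp v' ∧
      ∀ p p', (JSG A v v').Adj p p' →
        (({p, p'} : Set (Fin n)) ∩ supp (u k)).ncard = 1 := by
  have hpos : ∀ k, 0 < lam k := fun k => (hlam k).1
  have huS : ∀ k, u k ∈ coverSolutions A := fun k => (hu k).mem_coverSolutions
  have hub : ∀ k, IsBinaryVec (u k) := fun k => (hu k).isBinaryVec hA
  have hvb := hv.isBinaryVec hA
  have hv'b := hv'.isBinaryVec hA
  intro k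
  refine ⟨supp_subset_union_of_sum_mul_le (fun k => coverSolutions_nonneg (huS k)) hpos hle k, ?_⟩
  rintro p p' ⟨-, ⟨t, h₁, h₂⟩ | ⟨t, h₁, h₂⟩⟩
  · exact ncard_pair_inter_supp_eq_one hA hvb hv'b huS hub hpos hsum hle h₁ h₂ k
  · rw [Set.pair_comm]
    exact ncard_pair_inter_supp_eq_one hA hvb hv'b huS hub hpos hsum hle h₁ h₂ k

/-- properties of strict convex combinations dominated by `(v+v')/2`. -/
theorem stmt2 {m n : ℕ} (A : Matrix (Fin m) (Fin n) ℝ) (hA : IsBinaryMatrix A)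
    (v v' : Fin n → ℝ) (hne : v ≠ v')
    (hv : IsVertex (Qstar A) v) (hv' : IsVertex (Qstar A) v')
    (L : ℕ) (u : Fin L → (Fin n → ℝ)) (lam : Fin L → ℝ)
    (hu : ∀ k, IsVertex (Qstar A) (u k)) (hinj : Function.Injective u)
    (hlam : ∀ k, 0 < lam k ∧ lam k < 1) (hsum : ∑ k, lam k = 1)
    (hle : ∀ j, ∑ k, lam k * u k j ≤ (v j + v' j) / 2) :
    ∀ k, supp (u k) ⊆ supp v ∪ supp v' ∧
      ∀ p p', (JSG A v v').Adj p p' →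
        (({p, p'} : Set (Fin n)) ∩ supp (u k)).ncard = 1 :=
  stmt2_general A hA v v' hv hv' L u lam hu hlam hsum hle
end

section
/- Let A be a row circular binary matrix satisfying the standard assumptions and v, v' distinct vertices of Q*(A). If supp(v) is contained in a single connected component of G(v,v'), then G(v,v') is either connected or almost-connected (exactly two components, one an isolated node); in the almost-connected case |supp(v)| = |supp(v')|. -/
open Finset

/-!
Vertices of `Q*(A)` are integral, every row meets `supp v`, and every node of `supp v'` is the
only node of `supp v'` in some row. As `supp v` lies in one component and has two nodes, none of
its nodes is isolated; since common nodes of the supports are isolated, the supports are disjoint.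
Row circularity makes every edge join two nodes that are consecutive on the cycle among
`S = supp v ∪ supp v'`. If `q ∈ supp v'` is isolated, the row private to `q` forces both cyclic
neighbours of `q` in `S` into `supp v`. Cutting the cycle at `q`, a walk from one neighbour to the
other must bridge every gap of `S \ {q}`, so the nodes of `S \ {q}` alternate between the two
supports: hence `|supp v| = |supp v'|`, and every other node is adjacent to `supp v`.
-/

open Fin.NatCast Fin.CommRing

section CyclicOrder

variable {n : ℕ}

def fwdDist (a b : Fin n) : ℕ := (b - a : Fin n)

lemma fwdDist_lt (a b : Fin n) : fwdDist a b < n := (b - a).isLt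

open Classical in
/-- Junk value `q` when `S ⊆ {q}`. -/
noncomputable def cycSucc (S : Set (Fin n)) (q : Fin n) : Fin n :=
  if h : (S \ {q}).Nonempty then Function.argminOn (fwdDist q) (S \ {q}) h else q

open Classical in
noncomputable def cycPred (S : Set (Fin n)) (q : Fin n) : Fin n :=
  if h : (S \ {q}).Nonempty then Function.argminOn (fwdDist · q) (S \ {q}) h else q

variable {S : Set (Fin n)}

lemma cycSucc_mem_sdiff (hS : S.Nontrivial) (q : Fin n) : cycSucc S q ∈ S \ {q} := by
  obtain ⟨y, hy, hyq⟩ := hS.exists_ne q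
  have h : (S \ {q}).Nonempty := ⟨y, hy, hyq⟩
  rw [cycSucc, dif_pos h]
  exact Function.argminOn_mem _ _ h

lemma cycPred_mem_sdiff (hS : S.Nontrivial) (q : Fin n) : cycPred S q ∈ S \ {q} := by
  obtain ⟨y, hy, hyq⟩ := hS.exists_ne q
  have h : (S \ {q}).Nonempty := ⟨y, hy, hyq⟩
  rw [cycPred, dif_pos h]
  exact Function.argminOn_mem _ _ h

lemma cycSucc_mem (hS : S.Nontrivial) (q : Fin n) : cycSucc S q ∈ S := (cycSucc_mem_sdiff hS q).1

lemma cycSucc_ne (hS : S.Nontrivial) (q : Fin n) : cycSucc S q ≠ q := (cycSucc_mem_sdiff hS q).2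

lemma cycPred_mem (hS : S.Nontrivial) (q : Fin n) : cycPred S q ∈ S := (cycPred_mem_sdiff hS q).1

lemma cycPred_ne (hS : S.Nontrivial) (q : Fin n) : cycPred S q ≠ q := (cycPred_mem_sdiff hS q).2

lemma fwdDist_cycSucc_le {q y : Fin n} (hy : y ∈ S) (hyq : y ≠ q) :
    fwdDist q (cycSucc S q) ≤ fwdDist q y := by
  have hy' : y ∈ S \ {q} := ⟨hy, hyq⟩
  rw [cycSucc, dif_pos ⟨y, hy'⟩]
  exact Function.argminOn_le _ _ hy'

lemma fwdDist_cycPred_le {q y : Fin n} (hy : y ∈ S) (hyq : y ≠ q) :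
    fwdDist (cycPred S q) q ≤ fwdDist y q := by
  have hy' : y ∈ S \ {q} := ⟨hy, hyq⟩
  rw [cycPred, dif_pos ⟨y, hy'⟩]
  exact Function.argminOn_le (fwdDist · q) _ hy'

variable [NeZero n]

@[simp] lemma fwdDist_self (a : Fin n) : fwdDist a a = 0 := by simp [fwdDist]

lemma add_fwdDist (a b : Fin n) : a + (fwdDist a b : Fin n) = b := by
  simp [fwdDist, Fin.cast_val_eq_self]

lemma fwdDist_injective (a : Fin n) : Function.Injective (fwdDist a) := fun b c h => by
  rw [← add_fwdDist a b, h, add_fwdDist]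

lemma fwdDist_eq_zero {a b : Fin n} : fwdDist a b = 0 ↔ a = b := by
  rw [← fwdDist_self a, (fwdDist_injective a).eq_iff, eq_comm]

lemma fwdDist_pos {a b : Fin n} (h : a ≠ b) : 0 < fwdDist a b :=
  Nat.pos_of_ne_zero (mt fwdDist_eq_zero.mp h)

lemma fwdDist_trans_cases (a b c : Fin n) :
    fwdDist a c = fwdDist a b + fwdDist b c ∨ fwdDist a c + n = fwdDist a b + fwdDist b c := by
  have h : (c - a : Fin n) = (b - a) + (c - b) := by ring
  have hmod : fwdDist a c = (fwdDist a b + fwdDist b c) % n := by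
    rw [fwdDist, h, Fin.val_add]; rfl
  have := fwdDist_lt a b; have := fwdDist_lt b c
  rcases lt_or_ge (fwdDist a b + fwdDist b c) n with hlt | hge
  · exact Or.inl (hmod.trans (Nat.mod_eq_of_lt hlt))
  · right
    rw [hmod, Nat.mod_eq_sub_mod hge, Nat.mod_eq_of_lt (by omega)]
    omega

lemma fwdDist_add_fwdDist_swap {a b : Fin n} (h : a ≠ b) : fwdDist a b + fwdDist b a = n := by
  have := fwdDist_pos h
  rcases fwdDist_trans_cases a b a with h1 | h1 <;> simp at h1 <;> omega

lemma fwdDist_trans_of_le {a b c : Fin n} (h : fwdDist a b ≤ fwdDist a c) :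
    fwdDist a c = fwdDist a b + fwdDist b c := by
  have := fwdDist_lt b c
  rcases fwdDist_trans_cases a b c with h1 | h1 <;> omega

lemma mem_arc_iff {i j k : Fin n} : k ∈ arc i j ↔ fwdDist i k ≤ fwdDist i j := by
  constructor
  · rintro ⟨h, hle, rfl⟩
    have hlt : h < n := hle.trans_lt (fwdDist_lt i j)
    change fwdDist i (i + (h : Fin n)) ≤ fwdDist i j
    simpa [fwdDist, Fin.val_cast_of_lt hlt] using hle
  · exact fun h => ⟨fwdDist i k, h, (add_fwdDist i k).symm⟩

lemma arc_subset_or_arc_subset {i j p q : Fin n} (hp : p ∈ arc i j) (hq : q ∈ arc i j) :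
    arc p q ⊆ arc i j ∨ arc q p ⊆ arc i j := by
  wlog h : fwdDist i p ≤ fwdDist i q generalizing p q
  · exact (this hq hp (by omega)).symm
  left
  intro k hk
  rw [mem_arc_iff] at hp hq hk ⊢
  have := fwdDist_lt i q
  rw [fwdDist_trans_of_le h] at hq
  rcases fwdDist_trans_cases i p k with h1 | h1 <;> omega

lemma arc_subset_arc_of_mem_left {i j k : Fin n} (h : k ∈ arc i j) : arc i k ⊆ arc i j :=
  fun _ hx => mem_arc_iff.mpr ((mem_arc_iff.mp hx).trans (mem_arc_iff.mp h))

lemma arc_subset_arc_of_mem_right {i j k : Fin n} (h : k ∈ arc i j) : arc k j ⊆ arc i j := by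
  intro x hx
  rw [mem_arc_iff] at h hx ⊢
  have := fwdDist_lt i x
  rw [fwdDist_trans_of_le h]
  rcases fwdDist_trans_cases i k x with h1 | h1 <;> omega

lemma cycSucc_mem_arc {x y : Fin n} (hy : y ∈ S) (hyx : y ≠ x) : cycSucc S x ∈ arc x y :=
  mem_arc_iff.mpr (fwdDist_cycSucc_le hy hyx)

lemma cycPred_mem_arc {x y : Fin n} (hy : y ∈ S) (hyx : y ≠ x) : cycPred S x ∈ arc y x := by
  rw [mem_arc_iff]
  have h1 := fwdDist_cycPred_le (S := S) hy hyx
  have := fwdDist_lt y (cycPred S x)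
  rcases fwdDist_trans_cases y (cycPred S x) x with h | h <;> omega

lemma fwdDist_cycSucc_eq_add {q a : Fin n} (hq : q ∈ S) (haq : a ≠ q) (hσa : cycSucc S a ≠ q) :
    fwdDist q (cycSucc S a) = fwdDist q a + fwdDist a (cycSucc S a) := by
  have h1 : fwdDist a (cycSucc S a) ≤ fwdDist a q := fwdDist_cycSucc_le hq haq.symm
  have h2 : fwdDist a (cycSucc S a) ≠ fwdDist a q := fun h => hσa (fwdDist_injective a h)
  have := fwdDist_add_fwdDist_swap haq
  rcases fwdDist_trans_cases q a (cycSucc S a) with h | h <;> omega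

lemma fwdDist_cycSucc_le_of_lt {q a z : Fin n} (hq : q ∈ S) (haq : a ≠ q)
    (hσa : cycSucc S a ≠ q) (hz : z ∈ S) (h : fwdDist q a < fwdDist q z) :
    fwdDist q (cycSucc S a) ≤ fwdDist q z := by
  have hza : z ≠ a := by rintro rfl; omega
  have h1 := fwdDist_cycSucc_le hz hza
  have h2 := fwdDist_trans_of_le h.le
  have := fwdDist_cycSucc_eq_add hq haq hσa
  omega

section Nontrivial

variable (hS : S.Nontrivial)
include hS

lemma cycPred_cycSucc {q : Fin n} (hq : q ∈ S) : cycPred S (cycSucc S q) = q := by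
  set s := cycSucc S q
  by_contra hne
  have h1 : fwdDist (cycPred S s) s ≤ fwdDist q s :=
    fwdDist_cycPred_le hq (cycSucc_ne hS q).symm
  have h2 : fwdDist q s ≤ fwdDist q (cycPred S s) := fwdDist_cycSucc_le (cycPred_mem hS s) hne
  have h3 : 0 < fwdDist (cycPred S s) s := fwdDist_pos (cycPred_ne hS s)
  have := fwdDist_lt q (cycPred S s)
  rcases fwdDist_trans_cases q (cycPred S s) s with h | h <;> omega

lemma cycSucc_cycPred {q : Fin n} (hq : q ∈ S) : cycSucc S (cycPred S q) = q := by
  set s := cycPred S q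
  by_contra hne
  have h1 : fwdDist s (cycSucc S s) ≤ fwdDist s q :=
    fwdDist_cycSucc_le hq (cycPred_ne hS q).symm
  have h2 : fwdDist s q ≤ fwdDist (cycSucc S s) q := fwdDist_cycPred_le (cycSucc_mem hS s) hne
  have h3 : 0 < fwdDist s (cycSucc S s) := fwdDist_pos (cycSucc_ne hS s).symm
  have := fwdDist_lt (cycSucc S s) q
  rcases fwdDist_trans_cases s (cycSucc S s) q with h | h <;> omega

lemma cycSucc_injOn : Set.InjOn (cycSucc S) S :=
  Set.LeftInvOn.injOn fun _ hq => cycPred_cycSucc hS hq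

lemma cycPred_injOn : Set.InjOn (cycPred S) S :=
  Set.LeftInvOn.injOn fun _ hq => cycSucc_cycPred hS hq

lemma eq_cycSucc_or_eq_cycSucc_of_arc_inter_eq {i j x y : Fin n}
    (hCS : arc i j ∩ S = {x, y}) (hxy : x ≠ y) : y = cycSucc S x ∨ x = cycSucc S y := by
  have hx : x ∈ arc i j ∩ S := by simp [hCS]
  have hy : y ∈ arc i j ∩ S := by simp [hCS]
  have hmem : ∀ z ∈ arc i j, z ∈ S → z = x ∨ z = y := fun z hzC hzS => by
    have h : z ∈ arc i j ∩ S := ⟨hzC, hzS⟩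
    rwa [hCS] at h
  rcases arc_subset_or_arc_subset hx.1 hy.1 with h | h
  · exact Or.inl ((hmem _ (h (cycSucc_mem_arc hy.2 hxy.symm)) (cycSucc_mem hS x)).resolve_left
      (cycSucc_ne hS x)).symm
  · exact Or.inr ((hmem _ (h (cycSucc_mem_arc hx.2 hxy)) (cycSucc_mem hS y)).resolve_right
      (cycSucc_ne hS y)).symm

lemma fwdDist_le_fwdDist_cycPred {q y : Fin n} (hy : y ∈ S) (hyq : y ≠ q) :
    fwdDist q y ≤ fwdDist q (cycPred S q) := by
  have := fwdDist_add_fwdDist_swap hyq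
  have := fwdDist_add_fwdDist_swap (cycPred_ne hS q)
  have := fwdDist_cycPred_le hy hyq
  omega

end Nontrivial

end CyclicOrder

lemma SimpleGraph.reachable_of_exists_reachable {V : Type*} {G : SimpleGraph V} {K N : Set V}
    (hK : ∀ a ∈ K, ∀ b ∈ K, G.Reachable a b) (hN : ∀ x ∈ N, ∃ k ∈ K, G.Reachable x k) :
    ∀ a ∈ N, ∀ b ∈ N, G.Reachable a b := by
  intro a ha b hb
  obtain ⟨k, hk, hak⟩ := hN a ha
  obtain ⟨l, hl, hbl⟩ := hN b hb
  exact hak.trans ((hK k hk l hl).trans hbl.symm)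

structure CircularBipartite {n : ℕ} (G : SimpleGraph (Fin n)) (V₁ V₂ : Set (Fin n)) : Prop where
  disjoint : Disjoint V₁ V₂
  nontrivial : (V₁ ∪ V₂).Nontrivial
  mem_of_adj : ∀ ⦃a b⦄, G.Adj a b → a ∈ V₁ ∧ b ∈ V₂ ∨ a ∈ V₂ ∧ b ∈ V₁
  eq_cycSucc_of_adj : ∀ ⦃a b⦄, G.Adj a b → b = cycSucc (V₁ ∪ V₂) a ∨ a = cycSucc (V₁ ∪ V₂) b

namespace CircularBipartite

variable {n : ℕ} {G : SimpleGraph (Fin n)} {V₁ V₂ : Set (Fin n)}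
variable (hG : CircularBipartite G V₁ V₂)
include hG

lemma notMem_right {a : Fin n} (ha : a ∈ V₁) : a ∉ V₂ := Set.disjoint_left.mp hG.disjoint ha

lemma ne_of_mem {a b : Fin n} (ha : a ∈ V₁) (hb : b ∈ V₂) : a ≠ b :=
  fun h => hG.notMem_right ha (h ▸ hb)

lemma mem_right_of_adj {a b : Fin n} (h : G.Adj a b) (ha : a ∈ V₁) : b ∈ V₂ :=
  ((hG.mem_of_adj h).resolve_right fun h' => hG.notMem_right ha h'.1).2

lemma mem_left_of_adj {a b : Fin n} (h : G.Adj a b) (ha : a ∈ V₂) : b ∈ V₁ :=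
  ((hG.mem_of_adj h).resolve_left fun h' => hG.notMem_right h'.1 ha).2

lemma mem_union_of_adj {a b : Fin n} (h : G.Adj a b) : b ∈ V₁ ∪ V₂ := by
  rcases hG.mem_of_adj h with h' | h'
  exacts [Or.inr h'.2, Or.inl h'.2]

lemma reachable_of_forall_adj (hreach : ∀ p ∈ V₁, ∀ p' ∈ V₁, G.Reachable p p')
    (hadj : ∀ r ∈ V₂, ∃ x, G.Adj r x) : ∀ a ∈ V₁ ∪ V₂, ∀ b ∈ V₁ ∪ V₂, G.Reachable a b := by
  refine SimpleGraph.reachable_of_exists_reachable hreach fun x hx => ?_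
  rcases hx with hx | hx
  · exact ⟨x, hx, .refl x⟩
  · obtain ⟨y, hxy⟩ := hadj x hx
    exact ⟨y, hG.mem_left_of_adj hxy hx, hxy.reachable⟩

variable [NeZero n]

lemma eq_cycSucc_or_eq_cycPred_of_adj {a b : Fin n} (h : G.Adj a b) :
    b = cycSucc (V₁ ∪ V₂) a ∨ b = cycPred (V₁ ∪ V₂) a := by
  refine (hG.eq_cycSucc_of_adj h).imp id fun hab => ?_
  rw [hab, cycPred_cycSucc hG.nontrivial (hG.mem_union_of_adj h)]

lemma isolated_of_cycNeighbours {p : Fin n} (hp : p ∈ V₁)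
    (hsucc : cycSucc (V₁ ∪ V₂) p ∈ V₁ ∨ ∀ x, ¬ G.Adj (cycSucc (V₁ ∪ V₂) p) x)
    (hpred : cycPred (V₁ ∪ V₂) p ∈ V₁ ∨ ∀ x, ¬ G.Adj (cycPred (V₁ ∪ V₂) p) x) :
    ∀ x, ¬ G.Adj p x := by
  intro x hx
  have hxV₂ := hG.mem_right_of_adj hx hp
  rcases hG.eq_cycSucc_or_eq_cycPred_of_adj hx with rfl | rfl
  · exact hsucc.elim (hG.notMem_right · hxV₂) (· p hx.symm)
  · exact hpred.elim (hG.notMem_right · hxV₂) (· p hx.symm)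

section Sandwich

variable (hniso : ∀ p ∈ V₁, ∃ x, G.Adj p x) {q : Fin n} (hq : q ∈ V₂)
  (hiso : ∀ x, ¬ G.Adj q x) {i j : Fin n} (hCV₂ : arc i j ∩ V₂ = {q})
  (hCV₁ : (arc i j ∩ V₁).Nonempty) (hsat : ∀ p, arc i j ∩ V₁ = {p} → G.Adj p q)
include hniso hq hiso hCV₂ hCV₁ hsat

/-- If `σ q ∈ V₂`, the arc stops at `q`, so it contains `π q`, and also `π² q` because `π q` is
not adjacent to `q`; then both cyclic neighbours of `π q ∈ V₁` are in `V₁` or isolated. -/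
lemma cycSucc_mem_left_of_isolated : cycSucc (V₁ ∪ V₂) q ∈ V₁ := by
  set S := V₁ ∪ V₂
  have hS : S.Nontrivial := hG.nontrivial
  have hqC : q ∈ arc i j := (hCV₂.ge (Set.mem_singleton q)).1
  have hleft : ∀ x ∈ arc i j, x ∈ S → x ≠ q → x ∈ V₁ := fun x hxC hxS hxq =>
    hxS.resolve_right fun hx => hxq (hCV₂.le ⟨hxC, hx⟩)
  by_contra hσq
  have hσqV₂ : cycSucc S q ∈ V₂ := (cycSucc_mem hS q).resolve_left hσq
  have hback : ∀ p ∈ arc i j ∩ V₁, arc p q ⊆ arc i j := fun p hp =>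
    (arc_subset_or_arc_subset hp.1 hqC).resolve_right fun h => cycSucc_ne hS q
      (hCV₂.le ⟨h (cycSucc_mem_arc (Or.inl hp.2) (hG.ne_of_mem hp.2 hq)), hσqV₂⟩)
  obtain ⟨p₀, hp₀⟩ := hCV₁
  have hπC : cycPred S q ∈ arc i j :=
    hback p₀ hp₀ (cycPred_mem_arc (Or.inl hp₀.2) (hG.ne_of_mem hp₀.2 hq))
  have hπV₁ : cycPred S q ∈ V₁ := hleft _ hπC (cycPred_mem hS q) (cycPred_ne hS q)
  obtain ⟨p, hp, hpπ⟩ : ∃ p ∈ arc i j ∩ V₁, p ≠ cycPred S q := by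
    by_contra! h
    exact hiso _ (hsat _ (Set.eq_singleton_iff_unique_mem.mpr ⟨⟨hπC, hπV₁⟩, h⟩)).symm
  have hππC : cycPred S (cycPred S q) ∈ arc i j :=
    hback p hp (arc_subset_arc_of_mem_left (cycPred_mem_arc (Or.inl hp.2) (hG.ne_of_mem hp.2 hq))
      (cycPred_mem_arc (Or.inl hp.2) hpπ))
  have hππV₁ : cycPred S (cycPred S q) ∈ V₁ := by
    refine hleft _ hππC (cycPred_mem hS _) fun h => hσq ?_
    have hσπ := cycSucc_cycPred hS (cycPred_mem hS q)
    rw [h] at hσπ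
    exact hσπ ▸ hπV₁
  obtain ⟨x, hx⟩ := hniso _ hπV₁
  refine hG.isolated_of_cycNeighbours hπV₁ (Or.inr ?_) (Or.inl hππV₁) x hx
  rwa [cycSucc_cycPred hS (Or.inr hq)]

lemma cycPred_mem_left_of_isolated : cycPred (V₁ ∪ V₂) q ∈ V₁ := by
  set S := V₁ ∪ V₂
  have hS : S.Nontrivial := hG.nontrivial
  have hqC : q ∈ arc i j := (hCV₂.ge (Set.mem_singleton q)).1
  have hleft : ∀ x ∈ arc i j, x ∈ S → x ≠ q → x ∈ V₁ := fun x hxC hxS hxq =>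
    hxS.resolve_right fun hx => hxq (hCV₂.le ⟨hxC, hx⟩)
  by_contra hπq
  have hπqV₂ : cycPred S q ∈ V₂ := (cycPred_mem hS q).resolve_left hπq
  have hfwd : ∀ p ∈ arc i j ∩ V₁, arc q p ⊆ arc i j := fun p hp =>
    (arc_subset_or_arc_subset hp.1 hqC).resolve_left fun h => cycPred_ne hS q
      (hCV₂.le ⟨h (cycPred_mem_arc (Or.inl hp.2) (hG.ne_of_mem hp.2 hq)), hπqV₂⟩)
  obtain ⟨p₀, hp₀⟩ := hCV₁
  have hσC : cycSucc S q ∈ arc i j :=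
    hfwd p₀ hp₀ (cycSucc_mem_arc (Or.inl hp₀.2) (hG.ne_of_mem hp₀.2 hq))
  have hσV₁ : cycSucc S q ∈ V₁ := hleft _ hσC (cycSucc_mem hS q) (cycSucc_ne hS q)
  obtain ⟨p, hp, hpσ⟩ : ∃ p ∈ arc i j ∩ V₁, p ≠ cycSucc S q := by
    by_contra! h
    exact hiso _ (hsat _ (Set.eq_singleton_iff_unique_mem.mpr ⟨⟨hσC, hσV₁⟩, h⟩)).symm
  have hσσC : cycSucc S (cycSucc S q) ∈ arc i j :=
    hfwd p hp (arc_subset_arc_of_mem_right (cycSucc_mem_arc (Or.inl hp.2) (hG.ne_of_mem hp.2 hq))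
      (cycSucc_mem_arc (Or.inl hp.2) hpσ))
  have hσσV₁ : cycSucc S (cycSucc S q) ∈ V₁ := by
    refine hleft _ hσσC (cycSucc_mem hS _) fun h => hπq ?_
    have hπσ := cycPred_cycSucc hS (cycSucc_mem hS q)
    rw [h] at hπσ
    exact hπσ ▸ hσV₁
  obtain ⟨x, hx⟩ := hniso _ hσV₁
  refine hG.isolated_of_cycNeighbours hσV₁ (Or.inl hσσV₁) (Or.inr ?_) x hx
  rwa [cycPred_cycSucc hS (Or.inr hq)]

end Sandwich

/-- Cut the cycle at the isolated node `q`: a walk from its successor to its predecessor must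
cross every gap between consecutive nodes, and edges only bridge such gaps. -/
lemma adj_cycSucc_of_isolated {q : Fin n} (hq : q ∈ V₁ ∪ V₂) (hiso : ∀ x, ¬ G.Adj q x)
    (hreach : G.Reachable (cycSucc (V₁ ∪ V₂) q) (cycPred (V₁ ∪ V₂) q)) {s : Fin n}
    (hs : s ∈ V₁ ∪ V₂) (hsq : s ≠ q) (hsπ : s ≠ cycPred (V₁ ∪ V₂) q) :
    G.Adj s (cycSucc (V₁ ∪ V₂) s) := by
  set S := V₁ ∪ V₂
  have hS : S.Nontrivial := hG.nontrivial
  have hσs : cycSucc S s ≠ q := fun h => hsπ (by rw [← h, cycPred_cycSucc hS hs])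
  have hlt : fwdDist q s < fwdDist q (cycSucc S s) := by
    have := fwdDist_pos (cycSucc_ne hS s).symm
    rw [fwdDist_cycSucc_eq_add hq hsq hσs]
    omega
  obtain ⟨w⟩ := hreach
  obtain ⟨d, -, hd₁, hd₂⟩ := w.exists_boundary_dart {x | fwdDist q x ≤ fwdDist q s}
    (fwdDist_cycSucc_le hs hsq)
    (not_le.mpr (hlt.trans_le (fwdDist_le_fwdDist_cycPred hS (cycSucc_mem hS s) hσs)))
  replace hd₁ : fwdDist q d.fst ≤ fwdDist q s := hd₁
  replace hd₂ : fwdDist q s < fwdDist q d.snd := not_le.mp hd₂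
  have haq : d.fst ≠ q := fun h => hiso d.snd (h ▸ d.adj)
  have hbq : d.snd ≠ q := by rintro h; rw [h, fwdDist_self] at hd₂; omega
  rcases hG.eq_cycSucc_of_adj d.adj with (hb : d.snd = cycSucc S d.fst) | ha
  · have has : d.fst = s := by
      refine fwdDist_injective q (le_antisymm hd₁ (not_lt.mp fun h => ?_))
      have := fwdDist_cycSucc_le_of_lt hq haq (hb ▸ hbq) hs h
      rw [← hb] at this
      omega
    rw [← has, ← hb]
    exact d.adj
  · have := fwdDist_cycSucc_eq_add hq hbq (ha ▸ haq)
    rw [← ha] at this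
    omega

section Isolated

variable (hreach : ∀ p ∈ V₁, ∀ p' ∈ V₁, G.Reachable p p') {q : Fin n} (hq : q ∈ V₂)
  (hiso : ∀ x, ¬ G.Adj q x) (hσ : cycSucc (V₁ ∪ V₂) q ∈ V₁) (hπ : cycPred (V₁ ∪ V₂) q ∈ V₁)
include hreach hq hiso hσ hπ

lemma adj_cycSucc_of_mem_right_of_isolated {r : Fin n} (hr : r ∈ V₂) (hrq : r ≠ q) :
    G.Adj r (cycSucc (V₁ ∪ V₂) r) :=
  hG.adj_cycSucc_of_isolated (Or.inr hq) hiso (hreach _ hσ _ hπ) (Or.inr hr) hrq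
    (hG.ne_of_mem hπ hr).symm

lemma bijOn_cycSucc_of_isolated :
    Set.BijOn (cycSucc (V₁ ∪ V₂)) (V₂ \ {q}) (V₁ \ {cycSucc (V₁ ∪ V₂) q}) := by
  set S := V₁ ∪ V₂
  have hS : S.Nontrivial := hG.nontrivial
  have hinv : Set.InvOn (cycPred S) (cycSucc S) (V₂ \ {q}) (V₁ \ {cycSucc S q}) :=
    ⟨fun r hr => cycPred_cycSucc hS (Or.inr hr.1), fun p hp => cycSucc_cycPred hS (Or.inl hp.1)⟩
  refine hinv.bijOn (fun r ⟨hr, hrq⟩ => ⟨?_, ?_⟩) (fun p ⟨hp, hpσ⟩ => ?_)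
  · exact hG.mem_left_of_adj
      (hG.adj_cycSucc_of_mem_right_of_isolated hreach hq hiso hσ hπ hr hrq) hr
  · exact fun h => hrq (cycSucc_injOn hS (Or.inr hr) (Or.inr hq) h)
  · have hπpq : cycPred S p ≠ q := fun h =>
      hpσ (by rw [← h, cycSucc_cycPred hS (Or.inl hp)]; exact Set.mem_singleton p)
    have hπpπq : cycPred S p ≠ cycPred S q := fun h =>
      hG.ne_of_mem hp hq (cycPred_injOn hS (Or.inl hp) (Or.inr hq) h)
    have hadj := hG.adj_cycSucc_of_isolated (Or.inr hq) hiso (hreach _ hσ _ hπ)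
      (cycPred_mem hS p) hπpq hπpπq
    rw [cycSucc_cycPred hS (Or.inl hp)] at hadj
    exact ⟨hG.mem_right_of_adj hadj.symm hp, hπpq⟩

lemma ncard_eq_of_isolated : V₁.ncard = V₂.ncard := by
  have h₁ := Set.ncard_sdiff_singleton_add_one hσ
  have h₂ := Set.ncard_sdiff_singleton_add_one hq
  rw [← (hG.bijOn_cycSucc_of_isolated hreach hq hiso hσ hπ).ncard_eq] at h₁
  omega

lemma reachable_of_isolated :
    ∀ a ∈ (V₁ ∪ V₂) \ {q}, ∀ b ∈ (V₁ ∪ V₂) \ {q}, G.Reachable a b := by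
  refine SimpleGraph.reachable_of_exists_reachable hreach fun x ⟨hx, hxq⟩ => ?_
  rcases hx with hx | hx
  · exact ⟨x, hx, .refl x⟩
  · have hadj := hG.adj_cycSucc_of_mem_right_of_isolated hreach hq hiso hσ hπ hx hxq
    exact ⟨_, hG.mem_left_of_adj hadj hx, hadj.reachable⟩

end Isolated

end CircularBipartite

lemma SimpleGraph.Reachable.exists_adj_of_ne {V : Type*} {G : SimpleGraph V} {a b : V}
    (h : G.Reachable a b) (hab : a ≠ b) : ∃ x, G.Adj a x :=
  h.elim fun w => ⟨w.snd, w.adj_snd (w.not_nil_of_ne hab)⟩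

lemma notMem_extremePoints_convexHull_of_sub_mem_of_add_mem {E : Type*} [AddCommGroup E]
    [Module ℝ E] {X : Set E} {v e : E} (he : e ≠ 0) (h₁ : v - e ∈ X) (h₂ : v + e ∈ X) :
    v ∉ (convexHull ℝ X).extremePoints ℝ := by
  intro hv
  have hmid : v ∈ openSegment ℝ (v - e) (v + e) :=
    ⟨1 / 2, 1 / 2, by norm_num, by norm_num, by norm_num, by module⟩
  exact he (sub_eq_self.mp (hv.2 (subset_convexHull ℝ X h₁) (subset_convexHull ℝ X h₂) hmid))

section SetCovering

open Matrix

variable {m n : ℕ} {A : Matrix (Fin m) (Fin n) ℝ} {v : Fin n → ℝ}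

def intCovers (A : Matrix (Fin m) (Fin n) ℝ) : Set (Fin n → ℝ) :=
  {x | (∀ j, ∃ k : ℕ, x j = k) ∧ ∀ i, 1 ≤ ∑ j, A i j * x j}

lemma mem_intCovers_of_isVertex (hv : IsVertex (Qstar A) v) : v ∈ intCovers A :=
  extremePoints_convexHull_subset hv

lemma rowSupp_inter_supp_nonempty (hv : v ∈ intCovers A) (t : Fin m) :
    (rowSupp A t ∩ supp v).Nonempty := by
  obtain ⟨j, -, hj⟩ := Finset.exists_ne_zero_of_sum_ne_zero (zero_lt_one.trans_le (hv.2 t)).ne'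
  exact ⟨j, left_ne_zero_of_mul hj, right_ne_zero_of_mul hj⟩

lemma supp_nontrivial [NeZero n] (hcol : ∀ j, ∃ t, A t j = 0) (hv : v ∈ intCovers A) :
    (supp v).Nontrivial := by
  have hne : ∀ x, ∃ y ∈ supp v, y ≠ x := fun x => by
    obtain ⟨t, ht⟩ := hcol x
    obtain ⟨y, hyt, hy⟩ := rowSupp_inter_supp_nonempty hv t
    exact ⟨y, hy, fun h => hyt (h ▸ ht)⟩
  obtain ⟨y, hy, -⟩ := hne 0
  obtain ⟨z, hz, hzy⟩ := hne y
  exact ⟨y, hy, z, hz, hzy.symm⟩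

lemma one_le_of_mem_supp (hv : v ∈ intCovers A) {j : Fin n} (hj : j ∈ supp v) : 1 ≤ v j := by
  obtain ⟨k, hk⟩ := hv.1 j
  have hk0 : (k : ℝ) ≠ 0 := hk ▸ hj
  rw [hk]
  exact_mod_cast Nat.one_le_iff_ne_zero.mpr (by exact_mod_cast hk0)

lemma mul_nonneg_of_mem_intCovers (hbin : IsBinaryMatrix A) (hv : v ∈ intCovers A)
    (i : Fin m) (j : Fin n) : 0 ≤ A i j * v j := by
  obtain ⟨k, hk⟩ := hv.1 j
  rcases hbin i j with h | h <;> rw [h, hk] <;> positivity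

lemma add_single_mem_intCovers (hbin : IsBinaryMatrix A) (hv : v ∈ intCovers A) (p : Fin n) :
    v + Pi.single p 1 ∈ intCovers A := by
  refine ⟨fun j => ?_, fun i => ?_⟩
  · obtain ⟨k, hk⟩ := hv.1 j
    rcases eq_or_ne j p with rfl | hjp
    · exact ⟨k + 1, by simp [hk]⟩
    · exact ⟨k, by simp [hjp, hk]⟩
  · change 1 ≤ (A *ᵥ (v + Pi.single p 1)) i
    rw [Matrix.mulVec_add, Matrix.mulVec_single_one, Pi.add_apply, Matrix.col_apply]
    have : 1 ≤ (A *ᵥ v) i := hv.2 i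
    rcases hbin i p with h | h <;> rw [h] <;> linarith

lemma sub_single_mem_intCovers (hbin : IsBinaryMatrix A) (hv : v ∈ intCovers A) {p : Fin n}
    (hp : p ∈ supp v) (h2 : ∀ i, A i p ≠ 0 → 2 ≤ ∑ j, A i j * v j) :
    v - Pi.single p 1 ∈ intCovers A := by
  refine ⟨fun j => ?_, fun i => ?_⟩
  · obtain ⟨k, hk⟩ := hv.1 j
    rcases eq_or_ne j p with rfl | hjp
    · obtain ⟨l, rfl⟩ : ∃ l, k = l + 1 :=
        Nat.exists_eq_add_one_of_ne_zero (by rintro rfl; exact hp (by simpa using hk))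
      exact ⟨l, by simp [hk]⟩
    · exact ⟨k, by simp [hjp, hk]⟩
  · change 1 ≤ (A *ᵥ (v - Pi.single p 1)) i
    rw [Matrix.mulVec_sub, Matrix.mulVec_single_one, Pi.sub_apply, Matrix.col_apply]
    have : 1 ≤ (A *ᵥ v) i := hv.2 i
    rcases hbin i p with h | h
    · rw [h]; simpa using this
    · have := h2 i (by rw [h]; norm_num)
      change 2 ≤ (A *ᵥ v) i at this
      rw [h]; linarith

/-- Otherwise `v` is the midpoint of the integer covers `v - eₚ` and `v + eₚ`. -/
lemma exists_rowSupp_inter_supp_eq_singleton (hbin : IsBinaryMatrix A)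
    (hv : IsVertex (Qstar A) v) {p : Fin n} (hp : p ∈ supp v) :
    ∃ t, rowSupp A t ∩ supp v = {p} := by
  have hvX := mem_intCovers_of_isVertex hv
  by_contra! h
  refine notMem_extremePoints_convexHull_of_sub_mem_of_add_mem (e := Pi.single p 1) (by simp)
    (sub_single_mem_intCovers hbin hvX hp fun i hip => ?_) (add_single_mem_intCovers hbin hvX p) hv
  obtain ⟨j, ⟨hij, hj⟩, hjp⟩ : ∃ j ∈ rowSupp A i ∩ supp v, j ≠ p := by
    by_contra! h'
    exact h i (Set.eq_singleton_iff_unique_mem.mpr ⟨⟨hip, hp⟩, h'⟩)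
  have hAip : A i p = 1 := (hbin i p).resolve_left hip
  have hAij : A i j = 1 := (hbin i j).resolve_left hij
  calc (2 : ℝ) ≤ A i p * v p + A i j * v j := by
        rw [hAip, hAij]; linarith [one_le_of_mem_supp hvX hp, one_le_of_mem_supp hvX hj]
    _ ≤ ∑ k, A i k * v k :=
        Finset.add_le_sum (fun k _ => mul_nonneg_of_mem_intCovers hbin hvX i k)
          (Finset.mem_univ p) (Finset.mem_univ j) hjp.symm

end SetCovering

section JointSaturationGraph

variable {m n : ℕ} {A : Matrix (Fin m) (Fin n) ℝ} {v v' : Fin n → ℝ}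

lemma mem_supp_of_jsgEdge {p p' : Fin n} (h : jsgEdge A v v' p p') :
    p ∈ supp v ∧ p' ∈ supp v' :=
  let ⟨_, h₁, h₂⟩ := h
  ⟨(h₁.ge (Set.mem_singleton p)).2, (h₂.ge (Set.mem_singleton p')).2⟩

lemma disjoint_supp_of_forall_exists_adj (h : ∀ p ∈ supp v, ∃ x, (JSG A v v').Adj p x) :
    Disjoint (supp v) (supp v') := by
  refine Set.disjoint_left.mpr fun p hp hp' => ?_
  obtain ⟨x, hpx, ⟨t, h₁, h₂⟩ | ⟨t, h₁, h₂⟩⟩ := h p hp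
  · exact hpx (h₂.le ⟨(h₁.ge (Set.mem_singleton p)).1, hp'⟩)
  · exact hpx (h₁.le ⟨(h₂.ge (Set.mem_singleton p)).1, hp⟩)

lemma jsgNodes_eq_union (h : Disjoint (supp v) (supp v')) :
    jsgNodes v v' = supp v ∪ supp v' := by
  rw [jsgNodes, h.sdiff_eq_left, h.symm.sdiff_eq_left]

lemma circularBipartite_JSG [NeZero n] (hcirc : RowCircular A)
    (hdisj : Disjoint (supp v) (supp v')) (hS : (supp v ∪ supp v').Nontrivial) :
    CircularBipartite (JSG A v v') (supp v) (supp v') where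
  disjoint := hdisj
  nontrivial := hS
  mem_of_adj := by
    rintro a b ⟨-, h | h⟩
    exacts [Or.inl (mem_supp_of_jsgEdge h), Or.inr (mem_supp_of_jsgEdge h).symm]
  eq_cycSucc_of_adj := by
    have hedge : ∀ ⦃x y⦄, x ≠ y → jsgEdge A v v' x y →
        y = cycSucc (supp v ∪ supp v') x ∨ x = cycSucc (supp v ∪ supp v') y := by
      rintro x y hxy ⟨t, h₁, h₂⟩
      obtain ⟨i, j, hC⟩ := hcirc t
      refine eq_cycSucc_or_eq_cycSucc_of_arc_inter_eq hS (i := i) (j := j) ?_ hxy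
      rw [← hC, Set.inter_union_distrib_left, h₁, h₂, Set.singleton_union]
    rintro a b ⟨hab, h | h⟩
    exacts [hedge hab h, (hedge hab.symm h).symm]

lemma cycNeighbours_mem_supp_of_isolated [NeZero n] (hbin : IsBinaryMatrix A)
    (hcirc : RowCircular A) (hG : CircularBipartite (JSG A v v') (supp v) (supp v'))
    (hv : v ∈ intCovers A) (hv' : IsVertex (Qstar A) v')
    (hniso : ∀ p ∈ supp v, ∃ x, (JSG A v v').Adj p x) {q : Fin n} (hq : q ∈ supp v')
    (hiso : ∀ x, ¬ (JSG A v v').Adj q x) :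
    cycSucc (supp v ∪ supp v') q ∈ supp v ∧ cycPred (supp v ∪ supp v') q ∈ supp v := by
  obtain ⟨t, ht⟩ := exists_rowSupp_inter_supp_eq_singleton hbin hv' hq
  obtain ⟨i, j, hC⟩ := hcirc t
  have hCV₁ := rowSupp_inter_supp_nonempty hv t
  have hsat : ∀ p, rowSupp A t ∩ supp v = {p} → (JSG A v v').Adj p q := fun p hp =>
    ⟨hG.ne_of_mem (hp.ge (Set.mem_singleton p)).2 hq, Or.inl ⟨t, hp, ht⟩⟩
  rw [hC] at ht hCV₁ hsat
  exact ⟨hG.cycSucc_mem_left_of_isolated hniso hq hiso ht hCV₁ hsat,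
    hG.cycPred_mem_left_of_isolated hniso hq hiso ht hCV₁ hsat⟩

end JointSaturationGraph

theorem stmt8_general {m n : ℕ} [NeZero n] (A : Matrix (Fin m) (Fin n) ℝ)
    (hstd : StandardAssumptions A) (hcirc : RowCircular A)
    (v v' : Fin n → ℝ)
    (hv : IsVertex (Qstar A) v) (hv' : IsVertex (Qstar A) v')
    (hsv : ∀ p ∈ supp v, ∀ q ∈ supp v, (JSG A v v').Reachable p q) :
    (JSGConnected A v v' ∨ JSGAlmostConnected A v v') ∧
      (JSGAlmostConnected A v v' → (supp v).ncard = (supp v').ncard) := by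
  obtain ⟨hbin, -, -, hcol⟩ := hstd
  have hvX := mem_intCovers_of_isVertex hv
  have hnt : (supp v).Nontrivial := supp_nontrivial (fun j => (hcol j).2) hvX
  have hniso : ∀ p ∈ supp v, ∃ x, (JSG A v v').Adj p x := fun p hp => by
    obtain ⟨y, hy, hyp⟩ := hnt.exists_ne p
    exact (hsv p hp y hy).exists_adj_of_ne hyp.symm
  have hdisj := disjoint_supp_of_forall_exists_adj hniso
  have hG := circularBipartite_JSG hcirc hdisj (hnt.mono Set.subset_union_left)
  have hsand := fun q (hq : q ∈ supp v') hiso =>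
    cycNeighbours_mem_supp_of_isolated hbin hcirc hG hvX hv' hniso hq hiso
  refine ⟨?_, fun ⟨q, hq, hiso, _⟩ => ?_⟩
  · rw [JSGConnected, JSGAlmostConnected, jsgNodes_eq_union hdisj]
    by_cases h : ∃ q ∈ supp v', ∀ x, ¬ (JSG A v v').Adj q x
    · obtain ⟨q, hq, hiso⟩ := h
      obtain ⟨hσ, hπ⟩ := hsand q hq hiso
      exact Or.inr ⟨q, Or.inr hq, hiso, ⟨_, Or.inl hσ, cycSucc_ne hG.nontrivial q⟩,
        hG.reachable_of_isolated hsv hq hiso hσ hπ⟩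
    · push Not at h
      exact Or.inl (hG.reachable_of_forall_adj hsv h)
  · rw [jsgNodes_eq_union hdisj] at hq
    have hq' : q ∈ supp v' := hq.resolve_left fun hqv => (hniso q hqv).elim hiso
    obtain ⟨hσ, hπ⟩ := hsand q hq' hiso
    exact hG.ncard_eq_of_isolated hsv hq' hiso hσ hπ

/-- if `supp v` is contained in a single component of the joint saturation
graph, then the graph is connected or almost-connected, and in the latter case the
supports have equal cardinality. -/
theorem stmt8 {m n : ℕ} [NeZero n] (A : Matrix (Fin m) (Fin n) ℝ)
    (hstd : StandardAssumptions A) (hcirc : RowCircular A)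
    (v v' : Fin n → ℝ) (hne : v ≠ v')
    (hv : IsVertex (Qstar A) v) (hv' : IsVertex (Qstar A) v')
    (hsv : ∀ p ∈ supp v, ∀ q ∈ supp v, (JSG A v v').Reachable p q) :
    (JSGConnected A v v' ∨ JSGAlmostConnected A v v') ∧
      (JSGAlmostConnected A v v' → (supp v).ncard = (supp v').ncard) :=
  stmt8_general A hstd hcirc v v' hv hv' hsv
end
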